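/- arXiv:2208.03471 — 7 statements merged into one kernel-verified Lean document; each statement's English description precedes it below -/
import Mathlib

section
/- For the binary symmetric channel with crossover probability δ ∈ (0, 1/2), the Kullback–Leibler contraction coefficient equals (1 − 2δ)²; that is, for all probability distributions P, Q on {0,1} with 0 < D(P‖Q) < ∞ one has D(K∘P ‖ K∘Q) ≤ (1 − 2δ)² · D(P‖Q), and the supremum of D(K∘P ‖ K∘Q)/D(P‖Q) over all such pairs (P, Q) equals (1 − 2δ)². -/
/-!
Write a distribution on `Bool` as `bernoulliDist p`; the BSC then acts affinely on the parameter,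
`p ↦ m p = δ + (1 - 2δ) p`. For fixed `p`, the function `t ↦ a D(p‖t) - b D(m p‖m t)` vanishes at
`t = p` and has derivative `(t - p) (a / (t (1 - t)) - b (1 - 2δ)² / (m t (1 - m t)))`, so it is
nonnegative at `q` as soon as `b (1 - 2δ)² t (1 - t) ≤ a m t (1 - m t)` for `t` between `p` and `q`.
The identity `m t (1 - m t) - t (1 - t) = δ (1 - δ) (1 - 2t)²` gives this for `a = (1 - 2δ)²`,
`b = 1`, which is the contraction. The two variances agree at `t = 1/2`, so for `p = 1/2` and `q`
close to `1/2` the comparison holds with `b = -1` and `a = -c` for any `c < (1 - 2δ)²`: the ratio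
exceeds `c`, and the supremum is `(1 - 2δ)²`.
-/

/-- Kullback–Leibler divergence between two distributions on a finite alphabet. -/
noncomputable def klDiv {X : Type*} [Fintype X] (P Q : X → ℝ) : ℝ :=
  ∑ x, P x * Real.log (P x / Q x)

/-- `P` is a probability distribution on the finite alphabet `X`. -/
def IsProbDist {X : Type*} [Fintype X] (P : X → ℝ) : Prop :=
  (∀ x, 0 ≤ P x) ∧ ∑ x, P x = 1

/-- Pushforward `K ∘ P` of a distribution `P` through a channel `K`. -/
noncomputable def pushforward {X Y : Type*} [Fintype X] (K : X → Y → ℝ) (P : X → ℝ) :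
    Y → ℝ := fun y => ∑ x, P x * K x y

/-- The Kullback–Leibler contraction coefficient of a channel `K`: the supremum of
`D(K∘P‖K∘Q)/D(P‖Q)` over pairs of distributions with `0 < D(P‖Q) < ∞` (finiteness of
`D(P‖Q)` on a finite alphabet is equivalent to absolute continuity `P ≪ Q`). -/
noncomputable def etaKL {X Y : Type*} [Fintype X] [Fintype Y] (K : X → Y → ℝ) : ℝ :=
  sSup {r : ℝ | ∃ P Q : X → ℝ, IsProbDist P ∧ IsProbDist Q ∧
    (∀ x, Q x = 0 → P x = 0) ∧ 0 < klDiv P Q ∧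
    r = klDiv (pushforward K P) (pushforward K Q) / klDiv P Q}

/-- The binary symmetric channel with crossover probability `δ`. -/
noncomputable def BSC (δ : ℝ) : Bool → Bool → ℝ := fun x y => if y = x then 1 - δ else δ

open Real Set Topology

theorem le_of_hasDerivAt_of_sub_mul_nonneg {g g' : ℝ → ℝ} {p q : ℝ}
    (hg : ContinuousOn g (uIcc p q))
    (hg' : ∀ t ∈ Ioo (min p q) (max p q), HasDerivAt g (g' t) t)
    (hsign : ∀ t ∈ Ioo (min p q) (max p q), 0 ≤ (t - p) * g' t) : g p ≤ g q := by
  rcases le_total p q with hpq | hqp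
  · rw [uIcc_of_le hpq] at hg
    rw [min_eq_left hpq, max_eq_right hpq] at hg' hsign
    refine monotoneOn_of_hasDerivWithinAt_nonneg (f' := g') (convex_Icc p q) hg ?_ ?_
      (left_mem_Icc.2 hpq) (right_mem_Icc.2 hpq) hpq
    · rw [interior_Icc]
      exact fun t ht => (hg' t ht).hasDerivWithinAt
    · rw [interior_Icc]
      exact fun t ht => nonneg_of_mul_nonneg_right (hsign t ht) (sub_pos.2 ht.1)
  · rw [uIcc_of_ge hqp] at hg
    rw [min_eq_right hqp, max_eq_left hqp] at hg' hsign
    refine antitoneOn_of_hasDerivWithinAt_nonpos (f' := g') (convex_Icc q p) hg ?_ ?_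
      (left_mem_Icc.2 hqp) (right_mem_Icc.2 hqp) hqp
    · rw [interior_Icc]
      exact fun t ht => (hg' t ht).hasDerivWithinAt
    · rw [interior_Icc]
      exact fun t ht => nonpos_of_mul_nonneg_right (hsign t ht) (sub_neg.2 ht.2)

theorem ContinuousOn.mul_log_div {f : ℝ → ℝ} {S : Set ℝ} (a : ℝ) (hf : ContinuousOn f S)
    (h : ∀ t ∈ S, f t = 0 → a = 0) : ContinuousOn (fun t => a * Real.log (a / f t)) S := by
  rcases eq_or_ne a 0 with rfl | ha
  · simpa using continuousOn_const
  · exact continuousOn_const.mul <| (continuousOn_const.div hf fun t ht hft => ha (h t ht hft)).log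
      fun t ht => div_ne_zero ha fun hft => ha (h t ht hft)

theorem HasDerivAt.mul_log_div {f : ℝ → ℝ} {f' t : ℝ} (a : ℝ) (hf : HasDerivAt f f' t)
    (ht : f t ≠ 0) : HasDerivAt (fun t => a * Real.log (a / f t)) (-(a * f' / f t)) t := by
  rcases eq_or_ne a 0 with rfl | ha
  · simpa using hasDerivAt_const t (0 : ℝ)
  · refine (((hasDerivAt_const t a).div hf ht).log (div_ne_zero ha ht)).const_mul a
      |>.congr_deriv ?_
    simp only [Pi.div_apply]
    field_simp
    ring

theorem klDiv_self {X : Type*} [Fintype X] (P : X → ℝ) : klDiv P P = 0 := by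
  simp [klDiv]

def bernoulliDist (p : ℝ) : Bool → ℝ := fun b => if b then p else 1 - p

theorem isProbDist_bernoulliDist {p : ℝ} (h0 : 0 ≤ p) (h1 : p ≤ 1) :
    IsProbDist (bernoulliDist p) :=
  ⟨fun b => by cases b <;> simp [bernoulliDist, h0, h1], by simp [bernoulliDist]⟩

theorem IsProbDist.apply_false {P : Bool → ℝ} (hP : IsProbDist P) : P false = 1 - P true := by
  have h := hP.2
  rw [Fintype.sum_bool] at h
  linarith

theorem IsProbDist.eq_bernoulliDist {P : Bool → ℝ} (hP : IsProbDist P) :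
    P = bernoulliDist (P true) := by
  funext b
  cases b <;> simp [bernoulliDist, hP.apply_false]

theorem IsProbDist.eq_of_absCont_of_notMem_Ioo {P Q : Bool → ℝ} (hP : IsProbDist P)
    (hQ : IsProbDist Q) (hPQ : ∀ x, Q x = 0 → P x = 0) (hq : Q true ∉ Ioo 0 1) : P = Q := by
  rw [hP.eq_bernoulliDist, hQ.eq_bernoulliDist]
  rcases not_and_or.1 hq with hq0 | hq1
  · have hq0 : Q true = 0 := le_antisymm (not_lt.1 hq0) (hQ.1 true)
    rw [hq0, hPQ true hq0]
  · have hq1 : Q true = 1 := le_antisymm (by linarith [hQ.1 false, hQ.apply_false]) (not_lt.1 hq1)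
    have hp1 : P true = 1 := by
      linarith [hPQ false (by linarith [hQ.apply_false]), hP.apply_false]
    rw [hq1, hp1]

theorem pushforward_BSC_bernoulliDist (δ p : ℝ) :
    pushforward (BSC δ) (bernoulliDist p) = bernoulliDist (δ + (1 - 2 * δ) * p) := by
  funext b
  cases b <;> simp [pushforward, BSC, bernoulliDist] <;> ring

theorem klDiv_bernoulliDist (p q : ℝ) :
    klDiv (bernoulliDist p) (bernoulliDist q) =
      p * log (p / q) + (1 - p) * log ((1 - p) / (1 - q)) := by
  simp [klDiv, bernoulliDist]

theorem continuousOn_klDiv_bernoulliDist_right {p : ℝ} {S : Set ℝ} (h0 : 0 ∈ S → p = 0)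
    (h1 : 1 ∈ S → p = 1) : ContinuousOn (fun t => klDiv (bernoulliDist p) (bernoulliDist t)) S := by
  simp only [klDiv_bernoulliDist]
  refine (ContinuousOn.mul_log_div p continuousOn_id fun t ht h => h0 (h ▸ ht)).add
    ((continuousOn_const.sub continuousOn_id).mul_log_div (1 - p) fun t ht h => ?_)
  rw [h1 (by simpa [sub_eq_zero.1 h] using ht)]
  simp

theorem hasDerivAt_klDiv_bernoulliDist_right (p : ℝ) {t : ℝ} (ht0 : t ≠ 0) (ht1 : t ≠ 1) :
    HasDerivAt (fun t => klDiv (bernoulliDist p) (bernoulliDist t))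
      ((t - p) / (t * (1 - t))) t := by
  simp only [klDiv_bernoulliDist]
  have ht1' : 1 - t ≠ 0 := sub_ne_zero.2 (Ne.symm ht1)
  refine (HasDerivAt.mul_log_div p (hasDerivAt_id t) ht0).add
    (((hasDerivAt_id t).const_sub 1).mul_log_div (1 - p) ht1') |>.congr_deriv ?_
  simp only [id]
  field_simp
  ring

theorem klDiv_bernoulliDist_affine_le {α β a b p q : ℝ} (hα0 : 0 < α) (hα1 : α < 1)
    (hαβ0 : 0 < α + β) (hαβ1 : α + β < 1) (hp : p ∈ Icc (0 : ℝ) 1) (hq : q ∈ Ioo (0 : ℝ) 1)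
    (hvar : ∀ t ∈ Ioo (min p q) (max p q),
      b * β ^ 2 * (t * (1 - t)) ≤ a * ((α + β * t) * (1 - (α + β * t)))) :
    b * klDiv (bernoulliDist (α + β * p)) (bernoulliDist (α + β * q)) ≤
      a * klDiv (bernoulliDist p) (bernoulliDist q) := by
  set m : ℝ → ℝ := fun t => α + β * t
  have hm : ∀ t ∈ Icc (0 : ℝ) 1, m t ∈ Ioo 0 1 := fun t ht => by
    convert convex_Ioo (0 : ℝ) 1 ⟨hα0, hα1⟩ ⟨hαβ0, hαβ1⟩ (sub_nonneg.2 ht.2) ht.1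
      (sub_add_cancel 1 t) using 1
    simp only [m, smul_eq_mul]
    ring
  have hsub : uIcc p q ⊆ Icc 0 1 := uIcc_subset_Icc hp (Ioo_subset_Icc_self hq)
  have hIoo : Ioo (min p q) (max p q) ⊆ Ioo 0 1 := fun t ht =>
    ⟨(le_min hp.1 hq.1.le).trans_lt ht.1, ht.2.trans_le (max_le hp.2 hq.2.le)⟩
  have key := le_of_hasDerivAt_of_sub_mul_nonneg (p := p) (q := q)
    (g := fun t => a * klDiv (bernoulliDist p) (bernoulliDist t) -
      b * klDiv (bernoulliDist (m p)) (bernoulliDist (m t)))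
    (g' := fun t => a * ((t - p) / (t * (1 - t))) -
      b * ((m t - m p) / (m t * (1 - m t)) * β)) ?cont ?deriv ?sign
  · simp only [klDiv_self, mul_zero, sub_zero] at key
    exact sub_nonneg.1 key
  case cont =>
    have h0 : 0 ∈ uIcc p q → p = 0 := fun h => by
      rcases mem_uIcc.1 h with h | h <;> linarith [hp.1, hq.1]
    have h1 : 1 ∈ uIcc p q → p = 1 := fun h => by
      rcases mem_uIcc.1 h with h | h <;> linarith [hp.2, hq.2]
    exact (continuousOn_const.mul (continuousOn_klDiv_bernoulliDist_right h0 h1)).sub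
      (continuousOn_const.mul ((continuousOn_klDiv_bernoulliDist_right (S := Ioo 0 1)
        (by simp) (by simp)).comp (by fun_prop) fun t ht => hm t (hsub ht)))
  case deriv =>
    intro t ht
    obtain ⟨ht0, ht1⟩ := hIoo ht
    obtain ⟨hmt0, hmt1⟩ := hm t ⟨ht0.le, ht1.le⟩
    have hmt : HasDerivAt m β t :=
      (((hasDerivAt_id' t).const_mul β).const_add α).congr_deriv (mul_one β)
    exact ((hasDerivAt_klDiv_bernoulliDist_right p ht0.ne' ht1.ne).const_mul a).sub
      (((hasDerivAt_klDiv_bernoulliDist_right (m p) hmt0.ne' hmt1.ne).comp t hmt).const_mul b)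
  case sign =>
    intro t ht
    obtain ⟨ht0, ht1⟩ := hIoo ht
    obtain ⟨hmt0, hmt1⟩ := hm t ⟨ht0.le, ht1.le⟩
    have hT : 0 < t * (1 - t) := mul_pos ht0 (sub_pos.2 ht1)
    have hM : 0 < m t * (1 - m t) := mul_pos hmt0 (sub_pos.2 hmt1)
    have e : (t - p) * (a * ((t - p) / (t * (1 - t))) -
        b * ((m t - m p) / (m t * (1 - m t)) * β)) =
        (t - p) ^ 2 * (a * (m t * (1 - m t)) - b * β ^ 2 * (t * (1 - t))) /
          (t * (1 - t) * (m t * (1 - m t))) := by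
      field_simp
      ring
    rw [e]
    exact div_nonneg (mul_nonneg (sq_nonneg _) (sub_nonneg.2 (hvar t ht))) (mul_pos hT hM).le

theorem klDiv_pushforward_BSC_le {δ : ℝ} (hδ0 : 0 < δ) (hδ1 : δ < 1) {P Q : Bool → ℝ}
    (hP : IsProbDist P) (hQ : IsProbDist Q) (hPQ : ∀ x, Q x = 0 → P x = 0) :
    klDiv (pushforward (BSC δ) P) (pushforward (BSC δ) Q) ≤ (1 - 2 * δ) ^ 2 * klDiv P Q := by
  by_cases hq : Q true ∈ Ioo 0 1
  · have hp : P true ∈ Icc 0 1 := ⟨hP.1 true, by linarith [hP.1 false, hP.apply_false]⟩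
    rw [hP.eq_bernoulliDist, hQ.eq_bernoulliDist, pushforward_BSC_bernoulliDist,
      pushforward_BSC_bernoulliDist]
    have key := klDiv_bernoulliDist_affine_le (β := 1 - 2 * δ) (a := (1 - 2 * δ) ^ 2) (b := 1)
      hδ0 hδ1 (by linarith) (by linarith) hp hq fun t _ => by
        have hvar : (δ + (1 - 2 * δ) * t) * (1 - (δ + (1 - 2 * δ) * t)) - t * (1 - t) =
            δ * (1 - δ) * (1 - 2 * t) ^ 2 := by ring
        have := mul_nonneg (mul_nonneg hδ0.le (sub_nonneg.2 hδ1.le)) (sq_nonneg (1 - 2 * t))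
        nlinarith [mul_nonneg (sq_nonneg (1 - 2 * δ)) this]
    simpa only [one_mul] using key
  · rw [hP.eq_of_absCont_of_notMem_Ioo hQ hPQ hq, klDiv_self, klDiv_self, mul_zero]

theorem klDiv_half_bernoulliDist_pos {q : ℝ} (hq : q ∈ Ioo 0 1) (hq' : q ≠ 1 / 2) :
    0 < klDiv (bernoulliDist (1 / 2)) (bernoulliDist q) := by
  have hq0 := hq.1
  have hq1 : 0 < 1 - q := sub_pos.2 hq.2
  rw [klDiv_bernoulliDist, show (1 : ℝ) - 1 / 2 = 1 / 2 by norm_num, ← mul_add,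
    ← Real.log_mul (by positivity) (by positivity)]
  refine mul_pos (by norm_num) (Real.log_pos ?_)
  rw [div_mul_div_comm, one_lt_div (by positivity)]
  nlinarith [sq_pos_of_ne_zero (sub_ne_zero.2 hq')]

theorem exists_mul_klDiv_le_klDiv_pushforward_BSC {δ c : ℝ} (hδ0 : 0 < δ) (hδ1 : δ < 1)
    (hc : c < (1 - 2 * δ) ^ 2) :
    ∃ q ∈ Ioo (0 : ℝ) (1 / 2), c * klDiv (bernoulliDist (1 / 2)) (bernoulliDist q) ≤
      klDiv (pushforward (BSC δ) (bernoulliDist (1 / 2)))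
        (pushforward (BSC δ) (bernoulliDist q)) := by
  have hev : ∀ᶠ t in 𝓝 (1 / 2 : ℝ), c * ((δ + (1 - 2 * δ) * t) * (1 - (δ + (1 - 2 * δ) * t))) <
      (1 - 2 * δ) ^ 2 * (t * (1 - t)) := by
    refine ContinuousAt.eventually_lt (by fun_prop) (by fun_prop) ?_
    rw [show δ + (1 - 2 * δ) * (1 / 2) = 1 / 2 by ring]
    linarith
  obtain ⟨ε, hε, hball⟩ := Metric.eventually_nhds_iff.1 hev
  have hq : max (1 / 4) (1 / 2 - ε / 2) ∈ Ioo (0 : ℝ) (1 / 2) :=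
    ⟨lt_max_of_lt_left (by norm_num), max_lt (by norm_num) (by linarith)⟩
  refine ⟨_, hq, ?_⟩
  rw [pushforward_BSC_bernoulliDist, pushforward_BSC_bernoulliDist]
  have := klDiv_bernoulliDist_affine_le (β := 1 - 2 * δ) (p := 1 / 2) (a := -c) (b := -1) hδ0 hδ1
    (by linarith) (by linarith) ⟨by norm_num, by norm_num⟩ ⟨hq.1, hq.2.trans (by norm_num)⟩
    fun t ht => by
      rw [max_eq_left hq.2.le, min_eq_right hq.2.le] at ht
      have := @hball t <| by
        rw [Real.dist_eq, abs_sub_lt_iff]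
        constructor <;> linarith [ht.1, ht.2, le_max_right (1 / 4 : ℝ) (1 / 2 - ε / 2)]
      linarith
  linarith

theorem exists_lt_klDiv_pushforward_BSC_div {δ : ℝ} (hδ0 : 0 < δ) (hδ1 : δ < 1) {w : ℝ}
    (hw : w < (1 - 2 * δ) ^ 2) :
    ∃ P Q : Bool → ℝ, IsProbDist P ∧ IsProbDist Q ∧ (∀ x, Q x = 0 → P x = 0) ∧
      0 < klDiv P Q ∧ w < klDiv (pushforward (BSC δ) P) (pushforward (BSC δ) Q) / klDiv P Q := by
  obtain ⟨q, hq, hcq⟩ := exists_mul_klDiv_le_klDiv_pushforward_BSC (c := (w + (1 - 2 * δ) ^ 2) / 2)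
    hδ0 hδ1 (by linarith)
  have hq' : q ∈ Ioo (0 : ℝ) 1 := ⟨hq.1, hq.2.trans (by norm_num)⟩
  have hpos := klDiv_half_bernoulliDist_pos hq' hq.2.ne
  refine ⟨bernoulliDist (1 / 2), bernoulliDist q, isProbDist_bernoulliDist (by norm_num)
    (by norm_num), isProbDist_bernoulliDist hq'.1.le hq'.2.le, fun x hx => ?_, hpos, ?_⟩
  · cases x <;> simp [bernoulliDist] at hx <;> linarith [hq'.1, hq'.2]
  · rw [lt_div_iff₀ hpos]
    calc w * _ < (w + (1 - 2 * δ) ^ 2) / 2 * _ := mul_lt_mul_of_pos_right (by linarith) hpos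
      _ ≤ _ := hcq

/-- The KL contraction coefficient of `BSC(δ)`, `δ ∈ (0, 1/2)`, equals `(1 - 2δ)²`. -/
theorem etaKL_BSC (δ : ℝ) (hδ₀ : 0 < δ) (hδ₁ : δ < 1/2) :
    (∀ P Q : Bool → ℝ, IsProbDist P → IsProbDist Q → (∀ x, Q x = 0 → P x = 0) →
      0 < klDiv P Q →
      klDiv (pushforward (BSC δ) P) (pushforward (BSC δ) Q) ≤ (1 - 2*δ)^2 * klDiv P Q) ∧
    etaKL (BSC δ) = (1 - 2*δ)^2 := by
  have hδ1 : δ < 1 := by linarith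
  refine ⟨fun P Q hP hQ hPQ _ => klDiv_pushforward_BSC_le hδ₀ hδ1 hP hQ hPQ,
    csSup_eq_of_forall_le_of_forall_lt_exists_gt ?_ ?_ ?_⟩
  · obtain ⟨P, Q, hP, hQ, hPQ, hpos, -⟩ :=
      exists_lt_klDiv_pushforward_BSC_div hδ₀ hδ1 (neg_one_lt_zero.trans_le (sq_nonneg _))
    exact ⟨_, P, Q, hP, hQ, hPQ, hpos, rfl⟩
  · rintro r ⟨P, Q, hP, hQ, hPQ, hpos, rfl⟩
    exact (div_le_iff₀ hpos).2 (klDiv_pushforward_BSC_le hδ₀ hδ1 hP hQ hPQ)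
  · intro w hw
    obtain ⟨P, Q, hP, hQ, hPQ, hpos, hlt⟩ := exists_lt_klDiv_pushforward_BSC_div hδ₀ hδ1 hw
    exact ⟨_, ⟨P, Q, hP, hQ, hPQ, hpos, rfl⟩, hlt⟩
end

section
/- For any channel K from a finite alphabet 𝒳 to a finite alphabet 𝒴, the KL contraction coefficient is bounded above by the Dobrushin coefficient: η_KL(K) ≤ max over pairs x ≠ x' in 𝒳 of the total variation distance between K(x,·) and K(x',·). Equivalently, for all probability distributions P, Q on 𝒳 with 0 < D(P‖Q) < ∞, D(K∘P ‖ K∘Q) ≤ (max_{x≠x'} ‖K(x,·) − K(x',·)‖_TV) · D(P‖Q). -/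
/-- `K` is a channel (Markov kernel) from `X` to `Y`. -/
def IsChannel {X Y : Type*} [Fintype Y] (K : X → Y → ℝ) : Prop :=
  (∀ x y, 0 ≤ K x y) ∧ ∀ x, ∑ y, K x y = 1

/-- Total variation distance between two distributions on a finite alphabet. -/
noncomputable def tvDist {Y : Type*} [Fintype Y] (μ ν : Y → ℝ) : ℝ :=
  (1/2) * ∑ y, |μ y - ν y|

/-- The Dobrushin coefficient of a channel: the maximum total variation distance between
the rows `K(x,·)`, `K(x',·)` over pairs `x ≠ x'`. -/
noncomputable def dobrushin {X Y : Type*} [Fintype Y] (K : X → Y → ℝ) : ℝ :=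
  sSup {d : ℝ | ∃ x x' : X, x ≠ x' ∧ d = tvDist (K x) (K x')}


set_option linter.unusedSectionVars false
section Lemmas
variable {X Y : Type*} [Fintype X] [Fintype Y]

/-- positive-part sum equals TV when total masses agree -/
lemma sum_max_eq_tv (A B : Y → ℝ) (h : ∑ y, A y = ∑ y, B y) :
    ∑ y, max 0 (A y - B y) = tvDist A B := by
  have e : ∀ t : ℝ, max 0 t = (t + |t|) / 2 := by
    intro t
    rcases le_or_gt 0 t with h1 | h1
    · rw [max_eq_right h1, abs_of_nonneg h1]; ring
    · rw [max_eq_left h1.le, abs_of_neg h1]; ring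
  simp only [e]
  rw [tvDist, ← Finset.sum_div, Finset.sum_add_distrib, Finset.sum_sub_distrib, h]
  ring

lemma tv_row_le_one (K : X → Y → ℝ) (hK : IsChannel K) (x x' : X) :
    tvDist (K x) (K x') ≤ 1 := by
  rw [tvDist]
  have : ∑ y, |K x y - K x' y| ≤ ∑ y, (K x y + K x' y) := by
    apply Finset.sum_le_sum
    intro y _
    calc |K x y - K x' y| ≤ |K x y| + |K x' y| := abs_sub _ _
      _ = K x y + K x' y := by
          rw [abs_of_nonneg (hK.1 x y), abs_of_nonneg (hK.1 x' y)]
  calc (1/2 : ℝ) * ∑ y, |K x y - K x' y| ≤ (1/2) * ∑ y, (K x y + K x' y) := by linarith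
    _ = 1 := by rw [Finset.sum_add_distrib, hK.2 x, hK.2 x']; norm_num

lemma dob_bddAbove (K : X → Y → ℝ) (hK : IsChannel K) :
    BddAbove {d : ℝ | ∃ x x' : X, x ≠ x' ∧ d = tvDist (K x) (K x')} := by
  refine ⟨1, ?_⟩
  rintro d ⟨x, x', _, rfl⟩
  exact tv_row_le_one K hK x x'

lemma dob_nonneg' [Nontrivial X] (K : X → Y → ℝ) (hK : IsChannel K) :
    0 ≤ dobrushin K := by
  obtain ⟨x, x', hne⟩ := exists_pair_ne X
  have h2 : tvDist (K x) (K x') ≤ dobrushin K := by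
    apply le_csSup (dob_bddAbove K hK)
    exact ⟨x, x', hne, rfl⟩
  have h3 : 0 ≤ tvDist (K x) (K x') := by
    rw [tvDist]
    positivity
  exact h3.trans h2

lemma tv_le_dob [Nontrivial X] (K : X → Y → ℝ) (hK : IsChannel K) (x x' : X) :
    tvDist (K x) (K x') ≤ dobrushin K := by
  rcases eq_or_ne x x' with rfl | hne
  · have h0 : tvDist (K x) (K x) = 0 := by simp [tvDist]
    rw [h0]
    exact dob_nonneg' K hK
  · apply le_csSup (dob_bddAbove K hK)
    exact ⟨x, x', hne, rfl⟩

/-- TV of pushforwards of two prob dists is at most dobrushin. -/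
lemma tv_push_le [Nontrivial X] (K : X → Y → ℝ) (hK : IsChannel K)
    (α β : X → ℝ) (hα : IsProbDist α) (hβ : IsProbDist β) :
    tvDist (pushforward K α) (pushforward K β) ≤ dobrushin K := by
  have hdiff : ∀ y, pushforward K α y - pushforward K β y
      = ∑ x, ∑ x', α x * β x' * (K x y - K x' y) := by
    intro y
    have h1 : pushforward K α y = ∑ x, ∑ x', α x * β x' * K x y := by
      rw [pushforward]
      apply Finset.sum_congr rfl
      intro x _
      have e : ∑ x', α x * β x' * K x y = (α x * K x y) * ∑ x', β x' := by
        rw [Finset.mul_sum]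
        apply Finset.sum_congr rfl
        intro x' _
        ring
      rw [e, hβ.2, mul_one]
    have h2 : pushforward K β y = ∑ x, ∑ x', α x * β x' * K x' y := by
      rw [pushforward, Finset.sum_comm]
      apply Finset.sum_congr rfl
      intro x' _
      rw [show ∑ x, α x * β x' * K x' y = (∑ x, α x) * (β x' * K x' y) from by
        rw [Finset.sum_mul]; apply Finset.sum_congr rfl; intro x _; ring]
      rw [hα.2]; ring
    rw [h1, h2, ← Finset.sum_sub_distrib]
    apply Finset.sum_congr rfl
    intro x _
    rw [← Finset.sum_sub_distrib]
    apply Finset.sum_congr rfl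
    intro x' _
    ring
  have step : tvDist (pushforward K α) (pushforward K β)
      ≤ ∑ x, ∑ x', α x * β x' * tvDist (K x) (K x') := by
    rw [tvDist]
    have habs : ∀ y, |pushforward K α y - pushforward K β y|
        ≤ ∑ x, ∑ x', α x * β x' * |K x y - K x' y| := by
      intro y
      rw [hdiff y]
      calc |∑ x, ∑ x', α x * β x' * (K x y - K x' y)|
          ≤ ∑ x, |∑ x', α x * β x' * (K x y - K x' y)| := Finset.abs_sum_le_sum_abs _ _
        _ ≤ ∑ x, ∑ x', |α x * β x' * (K x y - K x' y)| := by
            apply Finset.sum_le_sum; intro x _; exact Finset.abs_sum_le_sum_abs _ _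
        _ = ∑ x, ∑ x', α x * β x' * |K x y - K x' y| := by
            apply Finset.sum_congr rfl; intro x _
            apply Finset.sum_congr rfl; intro x' _
            rw [abs_mul, abs_mul, abs_of_nonneg (hα.1 x), abs_of_nonneg (hβ.1 x')]
    calc (1/2 : ℝ) * ∑ y, |pushforward K α y - pushforward K β y|
        ≤ (1/2) * ∑ y, ∑ x, ∑ x', α x * β x' * |K x y - K x' y| := by
          have := Finset.sum_le_sum (fun y (_ : y ∈ Finset.univ) => habs y)
          linarith
      _ = ∑ x, ∑ x', α x * β x' * tvDist (K x) (K x') := by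
          simp only [tvDist, Finset.mul_sum]
          rw [Finset.sum_comm]
          apply Finset.sum_congr rfl; intro x _
          rw [Finset.sum_comm]
          apply Finset.sum_congr rfl; intro x' _
          apply Finset.sum_congr rfl; intro y _
          ring
  refine step.trans ?_
  calc ∑ x, ∑ x', α x * β x' * tvDist (K x) (K x')
      ≤ ∑ x, ∑ x', α x * β x' * dobrushin K := by
        apply Finset.sum_le_sum; intro x _
        apply Finset.sum_le_sum; intro x' _
        exact mul_le_mul_of_nonneg_left (tv_le_dob K hK x x')
          (mul_nonneg (hα.1 x) (hβ.1 x'))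
    _ = dobrushin K := by
        have e : ∀ x : X, ∑ x', α x * β x' * dobrushin K = α x * dobrushin K := by
          intro x
          have e2 : ∑ x', α x * β x' * dobrushin K
              = (α x * dobrushin K) * ∑ x', β x' := by
            rw [Finset.mul_sum]
            apply Finset.sum_congr rfl
            intro x' _
            ring
          rw [e2, hβ.2, mul_one]
        simp only [e]
        rw [← Finset.sum_mul, hα.2, one_mul]

/-- Key lemma: positive part of pushforward of a nonpositive-mass signed measure. -/
lemma key [Nontrivial X] (K : X → Y → ℝ) (hK : IsChannel K) (u : X → ℝ)
    (hu : ∑ x, u x ≤ 0) :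
    ∑ y, max 0 (∑ x, u x * K x y) ≤ dobrushin K * ∑ x, max 0 (u x) := by
  set a : ℝ := ∑ x, max 0 (u x) with ha
  set b : ℝ := ∑ x, max 0 (-u x) with hb
  have ha0 : 0 ≤ a := Finset.sum_nonneg fun x _ => le_max_left _ _
  have hb0 : 0 ≤ b := Finset.sum_nonneg fun x _ => le_max_left _ _
  have hab : a ≤ b := by
    have : b - a = -∑ x, u x := by
      rw [hb, ha, ← Finset.sum_sub_distrib, ← Finset.sum_neg_distrib]
      apply Finset.sum_congr rfl
      intro x _
      rcases le_or_gt 0 (u x) with h | h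
      · rw [max_eq_right h, max_eq_left (by linarith)]; ring
      · rw [max_eq_left h.le, max_eq_right (by linarith)]; ring
    nlinarith
  rcases eq_or_lt_of_le ha0 with haz | hapos
  · -- a = 0 : every u x ≤ 0
    have hux : ∀ x, u x ≤ 0 := by
      intro x
      have h1 : ∀ x ∈ Finset.univ, (0:ℝ) ≤ max 0 (u x) := fun x _ => le_max_left _ _
      have h2 := (Finset.sum_eq_zero_iff_of_nonneg h1).mp haz.symm
      have := h2 x (Finset.mem_univ x)
      by_contra hc
      push_neg at hc
      rw [max_eq_right hc.le] at this
      linarith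
    have hLHS : ∑ y, max 0 (∑ x, u x * K x y) = 0 := by
      apply Finset.sum_eq_zero
      intro y _
      apply max_eq_left
      apply Finset.sum_nonpos
      intro x _
      exact mul_nonpos_of_nonpos_of_nonneg (hux x) (hK.1 x y)
    rw [hLHS, ← haz, mul_zero]
  · have hbpos : 0 < b := lt_of_lt_of_le hapos hab
    set α : X → ℝ := fun x => max 0 (u x) / a with hα
    set β : X → ℝ := fun x => max 0 (-u x) / b with hβ
    have hαd : IsProbDist α := by
      constructor
      · intro x; exact div_nonneg (le_max_left _ _) ha0
      · rw [hα, ← Finset.sum_div, ← ha, div_self (ne_of_gt hapos)]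
    have hβd : IsProbDist β := by
      constructor
      · intro x; exact div_nonneg (le_max_left _ _) hb0
      · rw [hβ, ← Finset.sum_div, ← hb, div_self (ne_of_gt hbpos)]
    have hu_eq : ∀ x, u x = a * α x - b * β x := by
      intro x
      rw [hα, hβ]
      simp only
      rw [mul_div_cancel₀ _ (ne_of_gt hapos), mul_div_cancel₀ _ (ne_of_gt hbpos)]
      rcases le_or_gt 0 (u x) with h | h
      · rw [max_eq_right h, max_eq_left (by linarith)]; ring
      · rw [max_eq_left h.le, max_eq_right (by linarith)]; ring
    have hKu : ∀ y, ∑ x, u x * K x y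
        = a * pushforward K α y - b * pushforward K β y := by
      intro y
      rw [pushforward, pushforward, Finset.mul_sum, Finset.mul_sum,
        ← Finset.sum_sub_distrib]
      apply Finset.sum_congr rfl
      intro x _
      rw [hu_eq x]
      ring
    have hbound : ∀ y, max 0 (∑ x, u x * K x y)
        ≤ a * max 0 (pushforward K α y - pushforward K β y) := by
      intro y
      rw [hKu y]
      have h1 : a * pushforward K α y - b * pushforward K β y
          ≤ a * (pushforward K α y - pushforward K β y) := by
        have hpβ : 0 ≤ pushforward K β y :=
          Finset.sum_nonneg fun x _ => mul_nonneg (hβd.1 x) (hK.1 x y)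
        nlinarith
      calc max 0 (a * pushforward K α y - b * pushforward K β y)
          ≤ max 0 (a * (pushforward K α y - pushforward K β y)) :=
            max_le_max le_rfl h1
        _ = a * max 0 (pushforward K α y - pushforward K β y) := by
            rcases le_or_gt 0 (pushforward K α y - pushforward K β y) with h | h
            · rw [max_eq_right h, max_eq_right (by positivity)]
            · rw [max_eq_left h.le, max_eq_left (by nlinarith), mul_zero]
    have hpush_sum : ∀ γ : X → ℝ, IsProbDist γ → ∑ y, pushforward K γ y = 1 := by
      intro γ hγ
      rw [show ∑ y, pushforward K γ y = ∑ y, ∑ x, γ x * K x y from rfl,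
        Finset.sum_comm]
      have : ∀ x : X, ∑ y, γ x * K x y = γ x := by
        intro x
        rw [← Finset.mul_sum, hK.2 x, mul_one]
      simp only [this]
      exact hγ.2
    calc ∑ y, max 0 (∑ x, u x * K x y)
        ≤ ∑ y, a * max 0 (pushforward K α y - pushforward K β y) :=
          Finset.sum_le_sum fun y _ => hbound y
      _ = a * ∑ y, max 0 (pushforward K α y - pushforward K β y) := by
          rw [Finset.mul_sum]
      _ = a * tvDist (pushforward K α) (pushforward K β) := by
          rw [sum_max_eq_tv _ _ (by rw [hpush_sum α hαd, hpush_sum β hβd])]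
      _ ≤ a * dobrushin K := by
          have := tv_push_le K hK α β hαd hβd
          nlinarith
      _ = dobrushin K * a := by ring

end Lemmas

open MeasureTheory

/-- integrability of the first hockey-stick integrand on positive intervals -/
lemma fr_int {g : ℝ → ℝ} (hg : Continuous g) (a b : ℝ) (ha : 0 < a) (hb : 0 < b) :
    IntervalIntegrable (fun γ => max 0 (g γ) / γ) volume a b := by
  apply ContinuousOn.intervalIntegrable
  apply ContinuousOn.div
  · exact (continuous_const.max hg).continuousOn
  · exact continuousOn_id
  · intro γ hγ
    have hmin : 0 < min a b := lt_min ha hb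
    exact ne_of_gt (lt_of_lt_of_le hmin hγ.1)

lemma f1_int (p q a b : ℝ) (ha : 0 < a) (hb : 0 < b) :
    IntervalIntegrable (fun γ => max 0 (p - γ * q) / γ) volume a b :=
  fr_int (continuous_const.sub (continuous_id.mul continuous_const)) a b ha hb

lemma f2_int' (p q a b : ℝ) (ha : 0 < a) (hb : 0 < b) :
    IntervalIntegrable (fun s => max 0 (s * q - p) / s) volume a b :=
  fr_int ((continuous_id.mul continuous_const).sub continuous_const) a b ha hb

/-- integrability of the second integrand on `[0, c]` -/
lemma f2_int (p q c : ℝ) (hp : 0 ≤ p) (hq : 0 ≤ q) (hc : 0 ≤ c) :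
    IntervalIntegrable (fun s => max 0 (s * q - p) / s) volume 0 c := by
  rw [intervalIntegrable_iff_integrableOn_Ioc_of_le hc]
  apply Measure.integrableOn_of_bounded (M := q)
  · exact (measure_Ioc_lt_top).ne
  · apply Measurable.aestronglyMeasurable
    measurability
  · apply MeasureTheory.ae_restrict_of_forall_mem measurableSet_Ioc
    intro s hs
    have hs0 : 0 < s := hs.1
    rw [Real.norm_eq_abs, abs_of_nonneg (div_nonneg (le_max_left _ _) hs0.le)]
    rw [div_le_iff₀ hs0]
    rcases le_or_gt (s * q - p) 0 with h | h
    · rw [max_eq_left h]; positivity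
    · rw [max_eq_right h.le]; nlinarith

/-- an interval integral which vanishes pointwise on the closed interval -/
lemma int_vanish {f : ℝ → ℝ} {a b : ℝ} (hab : a ≤ b)
    (h : ∀ x ∈ Set.Icc a b, f x = 0) : (∫ x in a..b, f x) = 0 := by
  have e : (∫ x in a..b, f x) = ∫ _ in a..b, (0:ℝ) := by
    apply intervalIntegral.integral_congr
    intro x hx
    rw [Set.uIcc_of_le hab] at hx
    exact h x hx
  rw [e, intervalIntegral.integral_zero]

/-- The per-point integral representation. -/
lemma rep (p q T : ℝ) (hp : 0 ≤ p) (hq : 0 ≤ q) (hT : 1 ≤ T) (hpq : p ≤ T * q) :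
    (∫ γ in (1:ℝ)..T, max 0 (p - γ * q) / γ)
      + (∫ s in (0:ℝ)..1, max 0 (s * q - p) / s)
    = p * Real.log (p / q) - p + q := by
  rcases eq_or_lt_of_le hp with hp0 | hp0
  · -- p = 0
    have h1 : (∫ γ in (1:ℝ)..T, max 0 (p - γ * q) / γ) = 0 := by
      apply int_vanish hT
      intro γ hγ
      have : p - γ * q ≤ 0 := by nlinarith [hγ.1]
      simp [max_eq_left this]
    have h2 : (∫ s in (0:ℝ)..1, max 0 (s * q - p) / s) = q := by
      have e : (∫ s in (0:ℝ)..1, max 0 (s * q - p) / s) = ∫ s in (0:ℝ)..1, q := by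
        apply intervalIntegral.integral_congr_ae
        apply Filter.Eventually.of_forall
        intro s hs
        rw [Set.uIoc_of_le zero_le_one] at hs
        have hs0 : 0 < s := hs.1
        rw [← hp0, sub_zero, max_eq_right (by positivity), mul_comm,
          mul_div_assoc, div_self (ne_of_gt hs0), mul_one]
      rw [e, intervalIntegral.integral_const, smul_eq_mul]
      ring
    rw [h1, h2, ← hp0]
    simp
  · -- p > 0, hence q > 0
    have hq0 : 0 < q := by
      rcases eq_or_lt_of_le hq with h | h
      · exfalso; nlinarith
      · exact h
    set r : ℝ := p / q with hr
    have hr0 : 0 < r := div_pos hp0 hq0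
    have hprq : p = r * q := by rw [hr]; field_simp
    have hrT : r ≤ T := by rw [hr, div_le_iff₀ hq0]; linarith
    rcases le_or_gt 1 r with hr1 | hr1
    · -- r ≥ 1 : second integral is 0, first is p log r - q (r-1)
      have h2 : (∫ s in (0:ℝ)..1, max 0 (s * q - p) / s) = 0 := by
        apply int_vanish zero_le_one
        intro s hs
        have : s * q - p ≤ 0 := by nlinarith [hs.2]
        simp [max_eq_left this]
      have hsplit : (∫ γ in (1:ℝ)..T, max 0 (p - γ * q) / γ)
          = (∫ γ in (1:ℝ)..r, max 0 (p - γ * q) / γ)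
            + ∫ γ in r..T, max 0 (p - γ * q) / γ :=
        (intervalIntegral.integral_add_adjacent_intervals
          (f1_int p q 1 r zero_lt_one hr0) (f1_int p q r T hr0 (by linarith))).symm
      have htail : (∫ γ in r..T, max 0 (p - γ * q) / γ) = 0 := by
        apply int_vanish hrT
        intro γ hγ
        have : p - γ * q ≤ 0 := by nlinarith [hγ.1]
        simp [max_eq_left this]
      have hmain : (∫ γ in (1:ℝ)..r, max 0 (p - γ * q) / γ)
          = ∫ γ in (1:ℝ)..r, (p * γ⁻¹ - q) := by
        apply intervalIntegral.integral_congr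
        intro γ hγ
        rw [Set.uIcc_of_le hr1] at hγ
        have hγ0 : 0 < γ := lt_of_lt_of_le zero_lt_one hγ.1
        have h' : 0 ≤ p - γ * q := by nlinarith [hγ.2]
        simp only
        rw [max_eq_right h', sub_div, mul_comm γ q, mul_div_assoc,
          div_self (ne_of_gt hγ0), mul_one, div_eq_mul_inv]
      have hval : (∫ γ in (1:ℝ)..r, (p * γ⁻¹ - q)) = p * Real.log r - q * (r - 1) := by
        rw [intervalIntegral.integral_sub, intervalIntegral.integral_const_mul,
          integral_inv, intervalIntegral.integral_const, smul_eq_mul, div_one]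
        · ring
        · rw [Set.uIcc_of_le hr1]
          intro h
          have := h.1
          norm_num at this
        · apply IntervalIntegrable.const_mul
          apply ContinuousOn.intervalIntegrable
          apply ContinuousOn.inv₀ continuousOn_id
          intro γ hγ
          rw [Set.uIcc_of_le hr1] at hγ
          exact ne_of_gt (lt_of_lt_of_le zero_lt_one hγ.1)
        · exact intervalIntegrable_const
      rw [hsplit, htail, h2, hmain, hval, hr]
      have : q * (p / q - 1) = p - q := by field_simp
      rw [this]
      ring
    · -- r < 1 : first integral is 0
      have h1 : (∫ γ in (1:ℝ)..T, max 0 (p - γ * q) / γ) = 0 := by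
        apply int_vanish hT
        intro γ hγ
        have : p - γ * q ≤ 0 := by nlinarith [hγ.1]
        simp [max_eq_left this]
      have hsplit : (∫ s in (0:ℝ)..1, max 0 (s * q - p) / s)
          = (∫ s in (0:ℝ)..r, max 0 (s * q - p) / s)
            + ∫ s in r..(1:ℝ), max 0 (s * q - p) / s :=
        (intervalIntegral.integral_add_adjacent_intervals
          (f2_int p q r hp hq hr0.le) (f2_int' p q r 1 hr0 zero_lt_one)).symm
      have hhead : (∫ s in (0:ℝ)..r, max 0 (s * q - p) / s) = 0 := by
        apply int_vanish hr0.le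
        intro s hs
        have : s * q - p ≤ 0 := by nlinarith [hs.2]
        simp [max_eq_left this]
      have hmain : (∫ s in r..(1:ℝ), max 0 (s * q - p) / s)
          = ∫ s in r..(1:ℝ), (q - p * s⁻¹) := by
        apply intervalIntegral.integral_congr
        intro s hs
        rw [Set.uIcc_of_le hr1.le] at hs
        have hs0 : 0 < s := lt_of_lt_of_le hr0 hs.1
        have h' : 0 ≤ s * q - p := by nlinarith [hs.1]
        simp only
        rw [max_eq_right h', sub_div, mul_comm s q, mul_div_assoc,
          div_self (ne_of_gt hs0), mul_one, div_eq_mul_inv]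
      have hval : (∫ s in r..(1:ℝ), (q - p * s⁻¹))
          = q * (1 - r) - p * Real.log (1 / r) := by
        rw [intervalIntegral.integral_sub, intervalIntegral.integral_const_mul,
          integral_inv, intervalIntegral.integral_const, smul_eq_mul]
        · ring
        · rw [Set.uIcc_of_le hr1.le]
          intro h
          exact absurd h.1 (not_le.mpr hr0)
        · exact intervalIntegrable_const
        · apply IntervalIntegrable.const_mul
          apply ContinuousOn.intervalIntegrable
          apply ContinuousOn.inv₀ continuousOn_id
          intro s hs
          rw [Set.uIcc_of_le hr1.le] at hs
          exact ne_of_gt (lt_of_lt_of_le hr0 hs.1)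
      rw [hsplit, hhead, h1, hmain, hval]
      rw [one_div, Real.log_inv, hr, Real.log_div (ne_of_gt hp0) (ne_of_gt hq0)]
      have : q * (1 - p / q) = q - p := by field_simp
      rw [this]
      ring


section Main
set_option linter.unusedSectionVars false
variable {X Y : Type*} [Fintype X] [Fintype Y]

lemma intInt_sum {ι : Type*} (s : Finset ι) {f : ι → ℝ → ℝ} {μ : MeasureTheory.Measure ℝ}
    {a b : ℝ} (h : ∀ i ∈ s, IntervalIntegrable (f i) μ a b) :
    IntervalIntegrable (fun x => ∑ i ∈ s, f i x) μ a b := by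
  have h2 := IntervalIntegrable.sum s h
  have e : (∑ i ∈ s, f i) = fun x => ∑ i ∈ s, f i x := by
    funext x
    simp [Finset.sum_apply]
  rwa [e] at h2

lemma push_sum (K : X → Y → ℝ) (hK : IsChannel K) (R : X → ℝ) (hR : ∑ x, R x = 1) :
    ∑ y, pushforward K R y = 1 := by
  rw [show ∑ y, pushforward K R y = ∑ y, ∑ x, R x * K x y from rfl, Finset.sum_comm]
  have e : ∀ x : X, ∑ y, R x * K x y = R x := by
    intro x
    rw [← Finset.mul_sum, hK.2 x, mul_one]
  simp only [e]
  exact hR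

lemma kl_shift {Z : Type*} [Fintype Z] (A B : Z → ℝ) (hA : ∑ z, A z = 1)
    (hB : ∑ z, B z = 1) :
    klDiv A B = ∑ z, (A z * Real.log (A z / B z) - A z + B z) := by
  rw [Finset.sum_add_distrib, Finset.sum_sub_distrib, hA, hB, klDiv]
  ring

end Main

set_option maxHeartbeats 1000000 in
/-- The KL contraction coefficient is bounded above by the Dobrushin coefficient. -/
theorem etaKL_le_dobrushin {X Y : Type*} [Fintype X] [Fintype Y] [Nontrivial X]
    (K : X → Y → ℝ) (hK : IsChannel K) :
    etaKL K ≤ dobrushin K ∧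
    ∀ P Q : X → ℝ, IsProbDist P → IsProbDist Q → (∀ x, Q x = 0 → P x = 0) →
      0 < klDiv P Q →
      klDiv (pushforward K P) (pushforward K Q) ≤ dobrushin K * klDiv P Q := by
  have main : ∀ P Q : X → ℝ, IsProbDist P → IsProbDist Q → (∀ x, Q x = 0 → P x = 0) →
      klDiv (pushforward K P) (pushforward K Q) ≤ dobrushin K * klDiv P Q := by
    intro P Q hP hQ hac
    set η := dobrushin K with hη
    set P' := pushforward K P with hP'
    set Q' := pushforward K Q with hQ'
    set T : ℝ := 1 + ∑ x, P x / Q x with hTdef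
    have hdivnn : ∀ x, 0 ≤ P x / Q x := fun x => div_nonneg (hP.1 x) (hQ.1 x)
    have hsumnn : 0 ≤ ∑ x, P x / Q x := Finset.sum_nonneg fun x _ => hdivnn x
    have hT1 : 1 ≤ T := by rw [hTdef]; linarith
    have hT0 : 0 < T := by linarith
    have hTq : ∀ x, P x ≤ T * Q x := by
      intro x
      rcases eq_or_lt_of_le (hQ.1 x) with h0 | h0
      · rw [hac x h0.symm, ← h0, mul_zero]
      · have h1 : P x / Q x ≤ ∑ x', P x' / Q x' :=
          Finset.single_le_sum (fun x' _ => hdivnn x') (Finset.mem_univ x)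
        have h2 : P x / Q x ≤ T := by rw [hTdef]; linarith
        rw [div_le_iff₀ h0] at h2
        linarith
    have hP'nn : ∀ y, 0 ≤ P' y :=
      fun y => Finset.sum_nonneg fun x _ => mul_nonneg (hP.1 x) (hK.1 x y)
    have hQ'nn : ∀ y, 0 ≤ Q' y :=
      fun y => Finset.sum_nonneg fun x _ => mul_nonneg (hQ.1 x) (hK.1 x y)
    have hTq' : ∀ y, P' y ≤ T * Q' y := by
      intro y
      rw [hP', hQ', pushforward, pushforward, Finset.mul_sum]
      apply Finset.sum_le_sum
      intro x _
      rw [← mul_assoc]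
      exact mul_le_mul_of_nonneg_right (hTq x) (hK.1 x y)
    -- the four integrals
    set F1 : ℝ → ℝ := fun γ => ∑ x, max 0 (P x - γ * Q x) / γ with hF1
    set F2 : ℝ → ℝ := fun s => ∑ x, max 0 (s * Q x - P x) / s with hF2
    set G1 : ℝ → ℝ := fun γ => ∑ y, max 0 (P' y - γ * Q' y) / γ with hG1
    set G2 : ℝ → ℝ := fun s => ∑ y, max 0 (s * Q' y - P' y) / s with hG2
    have intF1 : IntervalIntegrable F1 MeasureTheory.volume 1 T :=
      intInt_sum _ fun x _ => f1_int (P x) (Q x) 1 T zero_lt_one hT0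
    have intF2 : IntervalIntegrable F2 MeasureTheory.volume 0 1 :=
      intInt_sum _ fun x _ => f2_int (P x) (Q x) 1 (hP.1 x) (hQ.1 x) zero_le_one
    have intG1 : IntervalIntegrable G1 MeasureTheory.volume 1 T :=
      intInt_sum _ fun y _ => f1_int (P' y) (Q' y) 1 T zero_lt_one hT0
    have intG2 : IntervalIntegrable G2 MeasureTheory.volume 0 1 :=
      intInt_sum _ fun y _ => f2_int (P' y) (Q' y) 1 (hP'nn y) (hQ'nn y) zero_le_one
    -- identity for klDiv P Q
    have idX : klDiv P Q = (∫ γ in (1:ℝ)..T, F1 γ) + ∫ s in (0:ℝ)..1, F2 s := by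
      rw [kl_shift P Q hP.2 hQ.2]
      have e : ∀ x : X, P x * Real.log (P x / Q x) - P x + Q x
          = (∫ γ in (1:ℝ)..T, max 0 (P x - γ * Q x) / γ)
            + ∫ s in (0:ℝ)..1, max 0 (s * Q x - P x) / s :=
        fun x => (rep (P x) (Q x) T (hP.1 x) (hQ.1 x) hT1 (hTq x)).symm
      rw [Finset.sum_congr rfl fun x _ => e x, Finset.sum_add_distrib,
        intervalIntegral.integral_finset_sum
          (fun x _ => f1_int (P x) (Q x) 1 T zero_lt_one hT0),
        intervalIntegral.integral_finset_sum
          (fun x _ => f2_int (P x) (Q x) 1 (hP.1 x) (hQ.1 x) zero_le_one)]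
    have idY : klDiv P' Q' = (∫ γ in (1:ℝ)..T, G1 γ) + ∫ s in (0:ℝ)..1, G2 s := by
      rw [kl_shift P' Q' (push_sum K hK P hP.2) (push_sum K hK Q hQ.2)]
      have e : ∀ y : Y, P' y * Real.log (P' y / Q' y) - P' y + Q' y
          = (∫ γ in (1:ℝ)..T, max 0 (P' y - γ * Q' y) / γ)
            + ∫ s in (0:ℝ)..1, max 0 (s * Q' y - P' y) / s :=
        fun y => (rep (P' y) (Q' y) T (hP'nn y) (hQ'nn y) hT1 (hTq' y)).symm
      rw [Finset.sum_congr rfl fun y _ => e y, Finset.sum_add_distrib,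
        intervalIntegral.integral_finset_sum
          (fun y _ => f1_int (P' y) (Q' y) 1 T zero_lt_one hT0),
        intervalIntegral.integral_finset_sum
          (fun y _ => f2_int (P' y) (Q' y) 1 (hP'nn y) (hQ'nn y) zero_le_one)]
    -- pointwise domination
    have mono1 : ∀ γ ∈ Set.Icc (1:ℝ) T, G1 γ ≤ η * F1 γ := by
      intro γ hγ
      have hγ0 : 0 < γ := lt_of_lt_of_le zero_lt_one hγ.1
      have ediff : ∀ y, P' y - γ * Q' y = ∑ x, (P x - γ * Q x) * K x y := by
        intro y
        rw [hP', hQ', pushforward, pushforward, Finset.mul_sum, ← Finset.sum_sub_distrib]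
        apply Finset.sum_congr rfl
        intro x _
        ring
      have hsum : ∑ x, (P x - γ * Q x) ≤ 0 := by
        rw [Finset.sum_sub_distrib, hP.2, ← Finset.mul_sum, hQ.2, mul_one]
        linarith [hγ.1]
      have hkey := key K hK (fun x => P x - γ * Q x) hsum
      have h2 : ∑ y, max 0 (P' y - γ * Q' y) ≤ η * ∑ x, max 0 (P x - γ * Q x) := by
        calc ∑ y, max 0 (P' y - γ * Q' y)
            = ∑ y, max 0 (∑ x, (P x - γ * Q x) * K x y) := by
              apply Finset.sum_congr rfl
              intro y _
              rw [ediff y]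
          _ ≤ η * ∑ x, max 0 (P x - γ * Q x) := hkey
      rw [hG1, hF1]
      simp only
      rw [← Finset.sum_div, ← Finset.sum_div, ← mul_div_assoc]
      exact div_le_div_of_nonneg_right h2 hγ0.le
    have mono2 : ∀ s ∈ Set.Icc (0:ℝ) 1, G2 s ≤ η * F2 s := by
      intro s hs
      rcases eq_or_lt_of_le hs.1 with h0 | h0
      · rw [hG2, hF2]
        simp only [← h0, zero_mul, div_zero, zero_sub]
        simp [Finset.sum_const_zero]
      · have ediff : ∀ y, s * Q' y - P' y = ∑ x, (s * Q x - P x) * K x y := by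
          intro y
          rw [hP', hQ', pushforward, pushforward, Finset.mul_sum, ← Finset.sum_sub_distrib]
          apply Finset.sum_congr rfl
          intro x _
          ring
        have hsum : ∑ x, (s * Q x - P x) ≤ 0 := by
          rw [Finset.sum_sub_distrib, hP.2, ← Finset.mul_sum, hQ.2, mul_one]
          linarith [hs.2]
        have hkey := key K hK (fun x => s * Q x - P x) hsum
        have h2 : ∑ y, max 0 (s * Q' y - P' y) ≤ η * ∑ x, max 0 (s * Q x - P x) := by
          calc ∑ y, max 0 (s * Q' y - P' y)
              = ∑ y, max 0 (∑ x, (s * Q x - P x) * K x y) := by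
                apply Finset.sum_congr rfl
                intro y _
                rw [ediff y]
            _ ≤ η * ∑ x, max 0 (s * Q x - P x) := hkey
        rw [hG2, hF2]
        simp only
        rw [← Finset.sum_div, ← Finset.sum_div, ← mul_div_assoc]
        exact div_le_div_of_nonneg_right h2 h0.le
    have ineq1 : (∫ γ in (1:ℝ)..T, G1 γ) ≤ ∫ γ in (1:ℝ)..T, η * F1 γ :=
      intervalIntegral.integral_mono_on hT1 intG1 (intF1.const_mul η) mono1
    have ineq2 : (∫ s in (0:ℝ)..1, G2 s) ≤ ∫ s in (0:ℝ)..1, η * F2 s :=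
      intervalIntegral.integral_mono_on zero_le_one intG2 (intF2.const_mul η) mono2
    rw [intervalIntegral.integral_const_mul] at ineq1 ineq2
    rw [idY, idX]
    calc (∫ γ in (1:ℝ)..T, G1 γ) + ∫ s in (0:ℝ)..1, G2 s
        ≤ η * (∫ γ in (1:ℝ)..T, F1 γ) + η * ∫ s in (0:ℝ)..1, F2 s := by linarith
      _ = η * ((∫ γ in (1:ℝ)..T, F1 γ) + ∫ s in (0:ℝ)..1, F2 s) := by ring
  constructor
  · apply Real.sSup_le
    · rintro r ⟨P, Q, hP, hQ, hac, hD, rfl⟩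
      rw [div_le_iff₀ hD]
      exact main P Q hP hQ hac
    · exact dob_nonneg' K hK
  · intro P Q hP hQ hac _
    exact main P Q hP hQ hac
end

section
/- Strong data processing inequality: let U, X, Y be random variables taking values in finite sets forming a Markov chain U → X → Y, where the conditional law of Y given X is given by a channel K (i.e., Y is conditionally independent of U given X, and P(Y = y | X = x) = K(x,y)). Then the mutual information satisfies I(U; Y) ≤ η_KL(K) · I(U; X). -/
/-- Mutual information of a joint distribution `J` on `A × B`: the KL divergence
between the joint law and the product of its marginals. -/
noncomputable def mutInfo {A B : Type*} [Fintype A] [Fintype B] (J : A × B → ℝ) : ℝ :=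
  klDiv J (fun p => (∑ b, J (p.1, b)) * (∑ a, J (a, p.2)))

/-!
Write the mutual information as the average divergence of the conditional laws from the marginal,
`I(U;X) = ∑ᵤ P(u) D(P_{X|u} ‖ P_X)`. Passing through `K` sends `P_{X|u}` to
`P_{Y|u} = K ∘ P_{X|u}` and `P_X` to `P_Y = K ∘ P_X`, so
`I(U;Y) = ∑ᵤ P(u) D(K ∘ P_{X|u} ‖ K ∘ P_X)`, and the definition of `η_KL(K)` bounds each term
by `η_KL(K) D(P_{X|u} ‖ P_X)`. The supremum defining `η_KL(K)` is finite (at most `1`) by the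
data processing inequality, itself the log-sum inequality.
-/

open Finset Real

/-- Tangent-line bound for `a ↦ a log (a / b)`, from `1 - 1/t ≤ log t` at `t = a / (b r)`. -/
lemma mul_log_add_sub_mul_le_mul_log_div {a b r : ℝ} (ha : 0 ≤ a) (hab : b = 0 → a = 0)
    (hb : 0 ≤ b) (hr : 0 < r) : a * log r + a - b * r ≤ a * log (a / b) := by
  rcases ha.eq_or_lt with rfl | ha
  · simpa using mul_nonneg hb hr.le
  have hb : 0 < b := hb.lt_of_ne fun h => ha.ne' (hab h.symm)
  have key := one_sub_inv_le_log_of_pos (x := a / (b * r)) (by positivity)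
  rw [log_div ha.ne' (by positivity), log_mul hb.ne' hr.ne', inv_div] at key
  rw [log_div ha.ne' hb.ne']
  have : a * (b * r / a) = b * r := by field_simp
  nlinarith

theorem sum_mul_log_div_le {ι : Type*} [Fintype ι] (a b : ι → ℝ)
    (ha : ∀ i, 0 ≤ a i) (hb : ∀ i, 0 ≤ b i) (hab : ∀ i, b i = 0 → a i = 0) :
    (∑ i, a i) * log ((∑ i, a i) / ∑ i, b i) ≤ ∑ i, a i * log (a i / b i) := by
  set A := ∑ i, a i
  set B := ∑ i, b i
  rcases (sum_nonneg fun i _ => ha i : 0 ≤ A).eq_or_lt with hA | hA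
  · have hzero : ∀ i, a i = 0 := fun i =>
      (sum_eq_zero_iff_of_nonneg fun i _ => ha i).mp hA.symm i (mem_univ i)
    simp [show A = 0 from hA.symm, hzero]
  have hB : 0 < B := by
    refine (sum_nonneg fun i _ => hb i).lt_of_ne fun hB => hA.ne' ?_
    exact sum_eq_zero fun i hi =>
      hab i ((sum_eq_zero_iff_of_nonneg fun i _ => hb i).mp hB.symm i hi)
  calc A * log (A / B) = ∑ i, (a i * log (A / B) + a i - b i * (A / B)) := by
        simp only [sum_sub_distrib, sum_add_distrib, ← sum_mul]
        field_simp
        ring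
    _ ≤ ∑ i, a i * log (a i / b i) := sum_le_sum fun i _ =>
        mul_log_add_sub_mul_le_mul_log_div (ha i) (hab i) (hb i) (by positivity)

lemma mul_mul_log_div_mul (p q k : ℝ) : p * k * log (p * k / (q * k)) = p * log (p / q) * k := by
  rcases eq_or_ne k 0 with rfl | hk
  · simp
  · rw [mul_div_mul_right _ _ hk]
    ring

section Divergence

variable {X Y : Type*} [Fintype X] [Fintype Y]

theorem klDiv_nonneg {P Q : X → ℝ} (hP : IsProbDist P) (hQ : IsProbDist Q)
    (hPQ : ∀ x, Q x = 0 → P x = 0) : 0 ≤ klDiv P Q := by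
  simpa [klDiv, hP.2, hQ.2] using sum_mul_log_div_le P Q hP.1 hQ.1 hPQ

/-- The data processing inequality: the log-sum inequality applied to each output letter. -/
theorem klDiv_pushforward_le {K : X → Y → ℝ} (hK : IsChannel K) {P Q : X → ℝ}
    (hP : ∀ x, 0 ≤ P x) (hQ : ∀ x, 0 ≤ Q x) (hPQ : ∀ x, Q x = 0 → P x = 0) :
    klDiv (pushforward K P) (pushforward K Q) ≤ klDiv P Q := calc
  klDiv (pushforward K P) (pushforward K Q)
      ≤ ∑ y, ∑ x, P x * K x y * log (P x * K x y / (Q x * K x y)) :=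
    sum_le_sum fun y _ => sum_mul_log_div_le _ _ (fun x => mul_nonneg (hP x) (hK.1 x y))
      (fun x => mul_nonneg (hQ x) (hK.1 x y)) fun x h => by
        rcases mul_eq_zero.mp h with h | h <;> simp [hPQ x, h]
  _ = klDiv P Q := by
    rw [sum_comm]
    simp only [mul_mul_log_div_mul, ← mul_sum, hK.2, mul_one, klDiv]

theorem klDiv_pushforward_le_etaKL_mul {K : X → Y → ℝ} (hK : IsChannel K) {P Q : X → ℝ}
    (hP : IsProbDist P) (hQ : IsProbDist Q) (hPQ : ∀ x, Q x = 0 → P x = 0) :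
    klDiv (pushforward K P) (pushforward K Q) ≤ etaKL K * klDiv P Q := by
  rcases (klDiv_nonneg hP hQ hPQ).eq_or_lt with h0 | hpos
  · rw [← h0, mul_zero]
    exact (klDiv_pushforward_le hK hP.1 hQ.1 hPQ).trans h0.ge
  rw [← div_le_iff₀ hpos]
  -- the data processing inequality bounds every ratio in the supremum by `1`
  refine le_csSup ⟨1, ?_⟩ ⟨P, Q, hP, hQ, hPQ, hpos, rfl⟩
  rintro _ ⟨P', Q', hP', hQ', hPQ', hpos', rfl⟩
  exact (div_le_one hpos').2 (klDiv_pushforward_le hK hP'.1 hQ'.1 hPQ')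

end Divergence

section Joint

variable {A B : Type*}

def marginalFst [Fintype B] (J : A × B → ℝ) (a : A) : ℝ := ∑ b, J (a, b)

def marginalSnd [Fintype A] (J : A × B → ℝ) (b : B) : ℝ := ∑ a, J (a, b)

/-- Conditional law of the second coordinate given the first, with junk value `0` where
`marginalFst J a = 0`. -/
noncomputable def condDist [Fintype B] (J : A × B → ℝ) (a : A) (b : B) : ℝ :=
  J (a, b) / marginalFst J a

lemma marginalFst_nonneg [Fintype B] {J : A × B → ℝ} (hJ : ∀ p, 0 ≤ J p) (a : A) :
    0 ≤ marginalFst J a :=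
  sum_nonneg fun b _ => hJ (a, b)

lemma IsProbDist.marginalSnd [Fintype A] [Fintype B] {J : A × B → ℝ} (hJ : IsProbDist J) :
    IsProbDist (marginalSnd J) :=
  ⟨fun b => sum_nonneg fun a _ => hJ.1 (a, b), by
    rw [← hJ.2, Fintype.sum_prod_type_right]; rfl⟩

lemma isProbDist_condDist [Fintype B] {J : A × B → ℝ} (hJ : ∀ p, 0 ≤ J p) {a : A}
    (ha : 0 < marginalFst J a) : IsProbDist (condDist J a) :=
  ⟨fun b => div_nonneg (hJ (a, b)) ha.le, by
    simp only [condDist, ← sum_div]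
    exact div_self ha.ne'⟩

lemma condDist_eq_zero_of_marginalSnd_eq_zero [Fintype A] [Fintype B] {J : A × B → ℝ}
    (hJ : ∀ p, 0 ≤ J p) {a : A} {b : B} (hb : marginalSnd J b = 0) : condDist J a b = 0 := by
  rw [condDist, (sum_eq_zero_iff_of_nonneg fun a _ => hJ (a, b)).mp hb a (mem_univ a), zero_div]

lemma mul_log_div_mul_eq_mul (j c s : ℝ) :
    j * log (j / (c * s)) = c * (j / c * log (j / c / s)) := by
  rcases eq_or_ne c 0 with rfl | hc
  · simp
  · rw [div_div]
    field_simp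

theorem mutInfo_eq_sum_marginalFst_mul_klDiv [Fintype A] [Fintype B] (J : A × B → ℝ) :
    mutInfo J = ∑ a, marginalFst J a * klDiv (condDist J a) (marginalSnd J) := by
  rw [mutInfo, klDiv, Fintype.sum_prod_type]
  refine sum_congr rfl fun a _ => ?_
  rw [klDiv, mul_sum]
  exact sum_congr rfl fun b _ => mul_log_div_mul_eq_mul _ _ _

variable {X Y : Type*} {K : X → Y → ℝ}

lemma marginalFst_comp_channel [Fintype X] [Fintype Y] (J : A × X → ℝ)
    (hK : ∀ x, ∑ y, K x y = 1) :
    marginalFst (fun p : A × Y => ∑ x, J (p.1, x) * K x p.2) = marginalFst J := by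
  funext a
  rw [marginalFst, sum_comm]
  simp only [← mul_sum, hK, mul_one, marginalFst]

lemma marginalSnd_comp_channel [Fintype A] [Fintype X] (J : A × X → ℝ) :
    marginalSnd (fun p : A × Y => ∑ x, J (p.1, x) * K x p.2) =
      pushforward K (marginalSnd J) := by
  funext y
  simp only [marginalSnd, pushforward, sum_mul]
  exact sum_comm

lemma condDist_comp_channel [Fintype X] [Fintype Y] (J : A × X → ℝ)
    (hK : ∀ x, ∑ y, K x y = 1) :
    condDist (fun p : A × Y => ∑ x, J (p.1, x) * K x p.2) =
      fun a => pushforward K (condDist J a) := by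
  funext a y
  rw [condDist, marginalFst_comp_channel J hK]
  simp only [pushforward, condDist, sum_div, div_mul_eq_mul_div]

end Joint

/-- Strong data processing inequality: for a Markov chain `U → X → Y` where the
conditional law of `Y` given `X` is the channel `K` (so that the joint law of `(U, Y)`
is `(u, y) ↦ ∑ x, P_{UX}(u, x) K(x, y)`), one has `I(U;Y) ≤ η_KL(K) · I(U;X)`. -/
theorem sdpi {U X Y : Type*} [Fintype U] [Fintype X] [Fintype Y]
    (K : X → Y → ℝ) (hK : IsChannel K)
    (PUX : U × X → ℝ) (hP : IsProbDist PUX) :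
    mutInfo (fun p : U × Y => ∑ x, PUX (p.1, x) * K x p.2) ≤ etaKL K * mutInfo PUX := by
  rw [mutInfo_eq_sum_marginalFst_mul_klDiv, mutInfo_eq_sum_marginalFst_mul_klDiv,
    marginalFst_comp_channel _ hK.2, marginalSnd_comp_channel, condDist_comp_channel _ hK.2,
    mul_sum]
  refine sum_le_sum fun u _ => ?_
  rcases (marginalFst_nonneg hP.1 u).eq_or_lt with h0 | hpos
  · simp [← h0]
  rw [mul_left_comm]
  exact mul_le_mul_of_nonneg_left (klDiv_pushforward_le_etaKL_mul hK
    (isProbDist_condDist hP.1 hpos) hP.marginalSnd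
    fun _ => condDist_eq_zero_of_marginalSnd_eq_zero hP.1) hpos.le
end

section
/- Information decay along a chain of binary symmetric channels: let δ ∈ (0, 1/2), let X₀ be a {0,1}-valued random variable, and for t = 1, …, d let X_t = X_{t−1} ⊕ Z_t (addition mod 2), where Z₁, …, Z_d are i.i.d. Bernoulli(δ) random variables independent of X₀. Then the mutual information between the input and the output of the chain satisfies I(X₀; X_d) ≤ (1 − 2δ)^{2d} · log 2. -/
open Real

theorem ZMod.sum_univ_two {M : Type*} [AddCommMonoid M] (f : ZMod 2 → M) :
    ∑ c, f c = f 0 + f 1 :=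
  Fin.sum_univ_two f

theorem ZMod.eq_zero_or_eq_one_of_two (c : ZMod 2) : c = 0 ∨ c = 1 := by
  revert c
  decide

theorem Fin.sum_pi_succ {α M : Type*} [Fintype α] [AddCommMonoid M] {n : ℕ}
    (f : (Fin (n + 1) → α) → M) :
    ∑ z, f z = ∑ a, ∑ z : Fin n → α, f (Fin.cons a z) := by
  rw [← (Fin.consEquiv fun _ => α).sum_comp, Fintype.sum_prod_type]
  rfl

section BinaryEntropy

theorem hasSum_log_two_sub_binEntropy {x : ℝ} (hx : |x| < 1) :
    HasSum (fun k : ℕ => (x ^ 2) ^ (k + 1) / ((2 * k + 1) * (2 * k + 2)))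
      (log 2 - binEntropy ((1 - x) / 2)) := by
  have hx2 : |x ^ 2| < 1 := by rwa [abs_pow, sq_lt_one_iff₀ (abs_nonneg x)]
  have hsum := ((hasSum_log_sub_log_of_abs_lt_one hx).mul_left x).sub
    (hasSum_pow_div_log_of_abs_lt_one hx2)
  obtain ⟨hneg, hpos⟩ := abs_lt.mp hx
  have hval : log 2 - binEntropy ((1 - x) / 2)
      = 2⁻¹ * (x * (log (1 + x) - log (1 - x)) - -log (1 - x ^ 2)) := by
    have h1 : 1 - (1 - x) / 2 = (1 + x) / 2 := by ring
    have h2 : 1 - x ^ 2 = (1 - x) * (1 + x) := by ring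
    rw [binEntropy, h1, log_inv, log_inv, log_div (by linarith) two_ne_zero,
      log_div (by linarith) two_ne_zero, h2, log_mul (by linarith) (by linarith)]
    ring
  rw [hval]
  refine (hsum.mul_left 2⁻¹).congr_fun fun k => ?_
  field_simp
  ring

theorem log_two_sub_binEntropy_mul_sq_le {x y : ℝ} (hxy : |x| ≤ y) (hy : y < 1) :
    (log 2 - binEntropy ((1 - x) / 2)) * y ^ 2 ≤
      x ^ 2 * (log 2 - binEntropy ((1 - y) / 2)) := by
  have hy' : |y| < 1 := by rwa [abs_of_nonneg ((abs_nonneg x).trans hxy)]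
  refine hasSum_le (fun k => ?_) ((hasSum_log_two_sub_binEntropy (hxy.trans_lt hy)).mul_right _)
    ((hasSum_log_two_sub_binEntropy hy').mul_left _)
  have hxy2 : (x ^ 2) ^ k ≤ (y ^ 2) ^ k :=
    pow_le_pow_left₀ (sq_nonneg x) (sq_le_sq' (abs_le.mp hxy).1 (abs_le.mp hxy).2) k
  calc (x ^ 2) ^ (k + 1) / ((2 * k + 1) * (2 * k + 2)) * y ^ 2
      = x ^ 2 * y ^ 2 / ((2 * k + 1) * (2 * k + 2)) * (x ^ 2) ^ k := by ring
    _ ≤ x ^ 2 * y ^ 2 / ((2 * k + 1) * (2 * k + 2)) * (y ^ 2) ^ k := by gcongr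
    _ = x ^ 2 * ((y ^ 2) ^ (k + 1) / ((2 * k + 1) * (2 * k + 2))) := by ring

theorem log_two_sub_binEntropy_le {x : ℝ} (hx : |x| ≤ 1) :
    log 2 - binEntropy ((1 - x) / 2) ≤ x ^ 2 * log 2 := by
  rcases hx.lt_or_eq with hx | hx
  · set g : ℝ → ℝ := fun y =>
      x ^ 2 * (log 2 - binEntropy ((1 - y) / 2)) - (log 2 - binEntropy ((1 - x) / 2)) * y ^ 2
    have hg : Filter.Tendsto g (nhdsWithin 1 (Set.Iio 1)) (nhds (g 1)) :=
      ((by fun_prop : Continuous g).tendsto 1).mono_left nhdsWithin_le_nhds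
    have hg₁ : 0 ≤ g 1 := ge_of_tendsto hg <| by
      filter_upwards [Ioo_mem_nhdsLT hx] with y hy
      exact sub_nonneg.mpr (log_two_sub_binEntropy_mul_sq_le hy.1.le hy.2)
    simpa [g] using hg₁
  · have hx2 : x ^ 2 = 1 := by rw [← sq_abs, hx, one_pow]
    obtain ⟨hneg, hpos⟩ := abs_le.mp hx.le
    have := binEntropy_nonneg (p := (1 - x) / 2) (by linarith) (by linarith)
    rw [hx2]
    linarith

end BinaryEntropy

section MutualInformation

theorem mutInfo_mul_eq_sum_negMulLog {A B : Type*} [Fintype A] [Fintype B] {p : A → ℝ}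
    {K : A → B → ℝ} (hp : ∀ a, 0 ≤ p a) (hK : ∀ a b, 0 ≤ K a b)
    (hK₁ : ∀ a, ∑ b, K a b = 1) :
    mutInfo (fun q : A × B => p q.1 * K q.1 q.2) =
      ∑ b, negMulLog (∑ a, p a * K a b) - ∑ a, p a * ∑ b, negMulLog (K a b) := by
  have hterm : ∀ a b, p a * K a b * log (p a * K a b / (p a * ∑ a', p a' * K a' b)) =
      -(p a * negMulLog (K a b)) - p a * K a b * log (∑ a', p a' * K a' b) := by
    intro a b
    rcases (mul_nonneg (hp a) (hK a b)).eq_or_lt with h | h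
    · rcases mul_eq_zero.mp h.symm with h' | h' <;> simp [h', negMulLog]
    · have hq : p a * K a b ≤ ∑ a', p a' * K a' b :=
        Finset.single_le_sum (f := fun a => p a * K a b)
          (fun a _ => mul_nonneg (hp a) (hK a b)) (Finset.mem_univ a)
      rw [mul_div_mul_left _ _ (pos_of_mul_pos_left h (hK a b)).ne',
        log_div (pos_of_mul_pos_right h (hp a)).ne' (h.trans_le hq).ne', negMulLog]
      ring
  calc mutInfo (fun q : A × B => p q.1 * K q.1 q.2)
      = ∑ a, ∑ b, (-(p a * negMulLog (K a b)) - p a * K a b * log (∑ a', p a' * K a' b)) := by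
        unfold mutInfo klDiv
        simp only [← Finset.mul_sum, hK₁, mul_one, ← hterm]
        exact Fintype.sum_prod_type _
    _ = ∑ b, negMulLog (∑ a, p a * K a b) - ∑ a, p a * ∑ b, negMulLog (K a b) := by
        simp only [Finset.sum_sub_distrib, Finset.sum_neg_distrib, ← Finset.mul_sum]
        rw [Finset.sum_comm]
        simp only [← Finset.sum_mul, negMulLog, neg_mul, Finset.sum_neg_distrib]
        ring

theorem sum_negMulLog_le_log_two {q : ZMod 2 → ℝ} (hq : ∑ c, q c = 1) :
    ∑ c, negMulLog (q c) ≤ log 2 := by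
  rw [ZMod.sum_univ_two] at hq ⊢
  rw [eq_sub_iff_add_eq.mpr hq, add_comm, ← binEntropy_eq_negMulLog_add_negMulLog_one_sub]
  exact binEntropy_le_log_two

end MutualInformation

section BinarySymmetricChannel

def bernWeight (δ : ℝ) (c : ZMod 2) : ℝ := if c = 1 then δ else 1 - δ

theorem bernWeight_nonneg {δ : ℝ} (h₀ : 0 ≤ δ) (h₁ : δ ≤ 1) (c : ZMod 2) :
    0 ≤ bernWeight δ c := by
  unfold bernWeight
  split_ifs <;> linarith

theorem sum_bernWeight_sub (δ : ℝ) (a : ZMod 2) : ∑ b, bernWeight δ (b - a) = 1 := by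
  rw [Fintype.sum_equiv (Equiv.subRight a) (fun b => bernWeight δ (b - a)) (bernWeight δ)
    fun _ => rfl]
  simp [bernWeight, ZMod.sum_univ_two]

theorem sum_negMulLog_bernWeight_sub (δ : ℝ) (a : ZMod 2) :
    ∑ b, negMulLog (bernWeight δ (b - a)) = binEntropy δ := by
  rw [Fintype.sum_equiv (Equiv.subRight a) (fun b => negMulLog (bernWeight δ (b - a)))
    (fun c => negMulLog (bernWeight δ c)) fun _ => rfl]
  simp [bernWeight, ZMod.sum_univ_two, binEntropy_eq_negMulLog_add_negMulLog_one_sub, add_comm]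

theorem sum_bernWeight_mul_bernWeight_sub (δ ε : ℝ) (c : ZMod 2) :
    ∑ a, bernWeight δ a * bernWeight ε (c - a) =
      bernWeight ((1 - (1 - 2 * δ) * (1 - 2 * ε)) / 2) c := by
  rw [ZMod.sum_univ_two]
  rcases c.eq_zero_or_eq_one_of_two with rfl | rfl <;>
    simp only [bernWeight, zero_ne_one, ↓reduceIte, sub_zero, sub_self,
      show (0 - 1 : ZMod 2) = 1 from rfl] <;> ring

theorem sum_ite_add_sum_eq_bernWeight (δ : ℝ) (d : ℕ) (a b : ZMod 2) :
    ∑ z : Fin d → ZMod 2, (if a + ∑ t, z t = b then ∏ t, bernWeight δ (z t) else 0) =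
      bernWeight ((1 - (1 - 2 * δ) ^ d) / 2) (b - a) := by
  induction d generalizing a with
  | zero =>
    rcases a.eq_zero_or_eq_one_of_two with rfl | rfl <;>
      rcases b.eq_zero_or_eq_one_of_two with rfl | rfl <;>
      simp [bernWeight, show (0 - 1 : ZMod 2) = 1 from rfl]
  | succ d ih =>
    have hε : (1 - (1 - 2 * δ) ^ (d + 1)) / 2
        = (1 - (1 - 2 * δ) * (1 - 2 * ((1 - (1 - 2 * δ) ^ d) / 2))) / 2 := by ring
    rw [hε, ← sum_bernWeight_mul_bernWeight_sub, Fin.sum_pi_succ]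
    refine Finset.sum_congr rfl fun z₀ _ => ?_
    simp only [Fin.sum_univ_succ, Fin.prod_univ_succ, Fin.cons_zero, Fin.cons_succ, ← add_assoc,
      sub_sub, ← ih (a + z₀), Finset.mul_sum, mul_ite, mul_zero]

theorem mutInfo_bsc_le {ε : ℝ} (hε₀ : 0 ≤ ε) (hε₁ : ε ≤ 1) {p : ZMod 2 → ℝ}
    (hp : IsProbDist p) :
    mutInfo (fun q : ZMod 2 × ZMod 2 => p q.1 * bernWeight ε (q.2 - q.1)) ≤
      (1 - 2 * ε) ^ 2 * log 2 := by
  rw [mutInfo_mul_eq_sum_negMulLog hp.1 (fun a b => bernWeight_nonneg hε₀ hε₁ (b - a))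
    (sum_bernWeight_sub ε)]
  have hout : ∑ b, ∑ a, p a * bernWeight ε (b - a) = 1 := by
    rw [Finset.sum_comm]
    simp only [← Finset.mul_sum, sum_bernWeight_sub, mul_one, hp.2]
  have hbin :=
    log_two_sub_binEntropy_le (x := 1 - 2 * ε) (abs_le.mpr ⟨by linarith, by linarith⟩)
  rw [show (1 - (1 - 2 * ε)) / 2 = ε by ring] at hbin
  simp only [sum_negMulLog_bernWeight_sub, ← Finset.sum_mul, hp.2, one_mul]
  linarith [sum_negMulLog_le_log_two hout]

end BinarySymmetricChannel

/-- Information decay along a chain of binary symmetric channels: if `X₀` is a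
`{0,1}`-valued random variable with law `p`, and `X_t = X_{t-1} ⊕ Z_t` for
i.i.d. `Bernoulli(δ)` noise variables `Z₁, …, Z_d` independent of `X₀` (so that the
joint law of `(X₀, X_d)` is `(a, b) ↦ p a * ∑_{z} 𝟙[a + ∑ₜ z t = b] ∏ₜ Bern(δ)(z t)`,
working in `ZMod 2` where `⊕` is addition), then `I(X₀; X_d) ≤ (1 - 2δ)^{2d} log 2`. -/
theorem bsc_chain_info_decay (δ : ℝ) (hδ₀ : 0 < δ) (hδ₁ : δ < 1/2) (d : ℕ)
    (p : ZMod 2 → ℝ) (hp : IsProbDist p) :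
    mutInfo (fun q : ZMod 2 × ZMod 2 =>
      p q.1 * ∑ z : Fin d → ZMod 2,
        (if q.1 + ∑ t, z t = q.2 then ∏ t, (if z t = 1 then δ else 1 - δ) else 0)) ≤
    (1 - 2*δ)^(2*d) * Real.log 2 := by
  have hx : |(1 - 2 * δ) ^ d| ≤ 1 := by
    rw [abs_pow]
    exact pow_le_one₀ (abs_nonneg _) (abs_le.mpr ⟨by linarith, by linarith⟩)
  obtain ⟨hx₀, hx₁⟩ := abs_le.mp hx
  calc _ = mutInfo (fun q : ZMod 2 × ZMod 2 =>
          p q.1 * bernWeight ((1 - (1 - 2 * δ) ^ d) / 2) (q.2 - q.1)) :=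
        congrArg mutInfo <| funext fun q =>
          congrArg (p q.1 * ·) (sum_ite_add_sum_eq_bernWeight δ d q.1 q.2)
    _ ≤ (1 - 2 * ((1 - (1 - 2 * δ) ^ d) / 2)) ^ 2 * log 2 :=
        mutInfo_bsc_le (by linarith) (by linarith) hp
    _ = (1 - 2 * δ) ^ (2 * d) * log 2 := by ring
end

section
/- Easy direction of the discrete Cheeger inequality: let G be a d-regular simple graph on n vertices with adjacency matrix A, and let μ₂ denote the second-largest eigenvalue of A. Then (d − μ₂)/2 ≤ h(G), where h(G) is the Cheeger constant of G. -/
/-!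
Test the Rayleigh quotient of the adjacency matrix `A` with `x = n • 𝟙_S - #S • 𝟙`, which sums
to zero. As `A` is symmetric and `A 𝟙 = d 𝟙`, it preserves `𝟙ᗮ`, so `⟪A x, x⟫ ≤ μ₂ ‖x‖²` by the
Rayleigh principle on `𝟙ᗮ`. The Laplacian `L = d I - A` has quadratic form
`⟪L x, x⟫ = ½ ∑_{u ∼ v} (x u - x v)² = n² |∂S|`, and `‖x‖² = n #S (n - #S)`, whence
`(d - μ₂) #S (n - #S) ≤ n |∂S|`; finally `n - #S ≥ n / 2`.
-/

open Classical in
/-- The number of boundary edges `|∂S| = |{(u,v) ∈ ℰ : u ∈ S, v ∉ S}|` of a vertex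
set `S` in a finite simple graph `G`. -/
noncomputable def edgeBoundaryCard {V : Type*} [Fintype V] (G : SimpleGraph V)
    (S : Finset V) : ℕ :=
  (Finset.univ.filter (fun p : V × V => p.1 ∈ S ∧ p.2 ∉ S ∧ G.Adj p.1 p.2)).card

/-- The Cheeger constant (isoperimetric ratio) of a finite simple graph `G` on `n`
vertices: the minimum of `|∂S|/|S|` over nonempty vertex sets `S` with `|S| ≤ n/2`. -/
noncomputable def cheegerConst {V : Type*} [Fintype V] (G : SimpleGraph V) : ℝ :=
  sInf {r : ℝ | ∃ S : Finset V, S.Nonempty ∧ 2 * S.card ≤ Fintype.card V ∧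
    r = (edgeBoundaryCard G S : ℝ) / S.card}

open Module.End RCLike

section Rayleigh

variable {𝕜 E : Type*} [RCLike 𝕜] [NormedAddCommGroup E] [InnerProductSpace 𝕜 E]

namespace LinearMap.IsSymmetric

theorem re_inner_le_mul_norm_sq [FiniteDimensional 𝕜 E] {T : E →ₗ[𝕜] E} (hT : T.IsSymmetric)
    {c : ℝ} (hc : ∀ μ : ℝ, HasEigenvalue T (μ : 𝕜) → μ ≤ c) (x : E) :
    re (inner 𝕜 (T x) x) ≤ c * ‖x‖ ^ 2 := by
  rcases eq_or_ne x 0 with rfl | hx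
  · simp
  have : Nontrivial E := ⟨⟨x, 0, hx⟩⟩
  have hbdd : BddAbove (Set.range fun y : {y : E // y ≠ 0} ↦
      re (inner 𝕜 (T y) (y : E)) / ‖(y : E)‖ ^ 2) :=
    ⟨‖T.toContinuousLinearMap‖, by
      rintro _ ⟨y, rfl⟩
      exact (le_abs_self _).trans (T.toContinuousLinearMap.rayleighQuotient_le_norm y)⟩
  have hx2 : 0 < ‖x‖ ^ 2 := by positivity
  calc re (inner 𝕜 (T x) x) = re (inner 𝕜 (T x) x) / ‖x‖ ^ 2 * ‖x‖ ^ 2 := by field_simp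
    _ ≤ (⨆ y : {y : E // y ≠ 0}, re (inner 𝕜 (T y) (y : E)) / ‖(y : E)‖ ^ 2) * ‖x‖ ^ 2 := by
      gcongr
      exact le_ciSup hbdd ⟨x, hx⟩
    _ ≤ c * ‖x‖ ^ 2 := by
      gcongr
      exact hc _ hT.hasEigenvalue_iSup_of_finiteDimensional

theorem re_inner_le_mul_norm_sq_of_mem [FiniteDimensional 𝕜 E] {T : E →ₗ[𝕜] E}
    (hT : T.IsSymmetric) {W : Submodule 𝕜 E} (hW : ∀ x ∈ W, T x ∈ W) {c : ℝ}
    (hc : ∀ μ : ℝ, ∀ w ∈ W, w ≠ 0 → T w = (μ : 𝕜) • w → μ ≤ c) {x : E} (hx : x ∈ W) :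
    re (inner 𝕜 (T x) x) ≤ c * ‖x‖ ^ 2 := by
  refine (hT.restrict_invariant hW).re_inner_le_mul_norm_sq (fun μ hμ ↦ ?_) ⟨x, hx⟩
  obtain ⟨w, hw, hw0⟩ := hμ.exists_hasEigenvector
  exact hc μ w w.2 (by simpa using hw0) (congrArg Subtype.val (mem_eigenspace_iff.mp hw))

theorem apply_mem_orthogonal_singleton {T : E →ₗ[𝕜] E} (hT : T.IsSymmetric) {v : E} {μ : 𝕜}
    (hv : T v = μ • v) : ∀ x ∈ (𝕜 ∙ v)ᗮ, T x ∈ (𝕜 ∙ v)ᗮ := by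
  intro x hx
  rw [Submodule.mem_orthogonal_singleton_iff_inner_right] at hx ⊢
  rw [← hT, hv, inner_smul_left, hx, mul_zero]

end LinearMap.IsSymmetric

end Rayleigh

section Graph

open Matrix Finset

variable {V : Type*} [Fintype V]

theorem EuclideanSpace.mem_orthogonal_one_iff (x : EuclideanSpace ℝ V) :
    x ∈ (ℝ ∙ WithLp.toLp 2 (1 : V → ℝ))ᗮ ↔ ∑ v, x v = 0 := by
  rw [Submodule.mem_orthogonal_singleton_iff_inner_right, EuclideanSpace.inner_eq_star_dotProduct]
  simp [dotProduct_one]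

theorem Fintype.nontrivial_of_sum_eq_zero {M : Type*} [AddCommMonoid M] {x : V → M} (hx0 : x ≠ 0)
    (hx : ∑ v, x v = 0) : Nontrivial V := by
  obtain ⟨v, hv⟩ := Function.ne_iff.mp hx0
  by_contra h
  rw [not_nontrivial_iff_subsingleton] at h
  exact hv (by rwa [Fintype.sum_subsingleton _ v] at hx)

variable [DecidableEq V]

theorem Matrix.IsHermitian.dotProduct_mulVec_le {A : Matrix V V ℝ}
    (hA : A.IsHermitian) {c : ℝ} (hA1 : A *ᵥ 1 = c • 1) {μ₂ : ℝ}
    (hμ₂ : μ₂ ∈ upperBounds {μ : ℝ | ∃ x : V → ℝ, x ≠ 0 ∧ ∑ v, x v = 0 ∧ A *ᵥ x = μ • x})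
    {x : V → ℝ} (hx : ∑ v, x v = 0) : x ⬝ᵥ (A *ᵥ x) ≤ μ₂ * (x ⬝ᵥ x) := by
  have hT := isSymmetric_toEuclideanLin_iff.mpr hA
  have key := hT.re_inner_le_mul_norm_sq_of_mem
    (hT.apply_mem_orthogonal_singleton (v := WithLp.toLp 2 1) (μ := c) (by simp [hA1]))
    (fun μ w hw hw0 hTw ↦ hμ₂ ⟨w.ofLp, by simpa using hw0,
      (EuclideanSpace.mem_orthogonal_one_iff w).mp hw, by simpa using congrArg WithLp.ofLp hTw⟩)
    (x := WithLp.toLp 2 x) ((EuclideanSpace.mem_orthogonal_one_iff _).mpr hx)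
  rw [← real_inner_self_eq_norm_sq, EuclideanSpace.inner_eq_star_dotProduct,
    EuclideanSpace.inner_eq_star_dotProduct] at key
  simpa [dotProduct_comm] using key

/-- `n • 𝟙_S - #S • 𝟙`: `n` times the component of `𝟙_S` orthogonal to the constants. -/
noncomputable def cutVector (S : Finset V) (v : V) : ℝ :=
  (if v ∈ S then (Fintype.card V : ℝ) else 0) - #S

theorem sum_cutVector (S : Finset V) : ∑ v, cutVector S v = 0 := by
  simp [cutVector, sum_sub_distrib, sum_ite_mem, mul_comm]

theorem cutVector_dotProduct_self (S : Finset V) :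
    cutVector S ⬝ᵥ cutVector S = #S * (Fintype.card V - #S) * Fintype.card V := by
  have h (v : V) : cutVector S v * cutVector S v =
      (if v ∈ S then (Fintype.card V : ℝ) * (Fintype.card V - 2 * #S) else 0) + (#S : ℝ) ^ 2 := by
    unfold cutVector; split_ifs <;> ring
  simp only [dotProduct, h, sum_add_distrib, sum_ite_mem, univ_inter, sum_const, card_univ,
    nsmul_eq_mul]
  ring

namespace SimpleGraph

theorem sum_adj_sq_sub_cutVector (G : SimpleGraph V) [DecidableRel G.Adj] (S : Finset V) :
    (∑ i, ∑ j, if G.Adj i j then (cutVector S i - cutVector S j) ^ 2 else 0) =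
      2 * (Fintype.card V : ℝ) ^ 2 * edgeBoundaryCard G S := by
  have h (i j : V) : (if G.Adj i j then (cutVector S i - cutVector S j) ^ 2 else 0) =
      (Fintype.card V : ℝ) ^ 2 * ((if i ∈ S ∧ j ∉ S ∧ G.Adj i j then 1 else 0) +
        (if j ∈ S ∧ i ∉ S ∧ G.Adj j i then 1 else 0)) := by
    unfold cutVector
    by_cases hi : i ∈ S <;> by_cases hj : j ∈ S <;> by_cases ha : G.Adj i j <;>
      simp [hi, hj, ha, G.adj_comm j i]
    all_goals ring
  have hB : (edgeBoundaryCard G S : ℝ) = ∑ i, ∑ j, if i ∈ S ∧ j ∉ S ∧ G.Adj i j then 1 else 0 := by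
    rw [edgeBoundaryCard, card_filter, ← Fintype.sum_prod_type']
    push_cast
    congr! 1
  simp only [h, ← mul_sum, sum_add_distrib]
  rw [sum_comm (f := fun i j ↦ if j ∈ S ∧ i ∉ S ∧ G.Adj j i then (1 : ℝ) else 0), ← hB]
  ring

theorem IsRegularOfDegree.dotProduct_lapMatrix_mulVec {R : Type*} [CommRing R] {G : SimpleGraph V}
    [DecidableRel G.Adj] {d : ℕ} (hreg : G.IsRegularOfDegree d) (x : V → R) :
    x ⬝ᵥ (G.lapMatrix R *ᵥ x) = d * (x ⬝ᵥ x) - x ⬝ᵥ (G.adjMatrix R *ᵥ x) := by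
  rw [lapMatrix, sub_mulVec, dotProduct_sub, dotProduct_mulVec_degMatrix]
  simp only [hreg _, dotProduct, mul_assoc, mul_sum]

theorem IsRegularOfDegree.mul_card_mul_sub_card_le_card_mul_edgeBoundaryCard
    {G : SimpleGraph V} [DecidableRel G.Adj] {d : ℕ} (hreg : G.IsRegularOfDegree d) {μ₂ : ℝ}
    (hμ₂ : μ₂ ∈ upperBounds {μ : ℝ | ∃ x : V → ℝ, x ≠ 0 ∧ ∑ v, x v = 0 ∧
      G.adjMatrix ℝ *ᵥ x = μ • x}) (S : Finset V) :
    (d - μ₂) * (#S * (Fintype.card V - #S)) ≤ Fintype.card V * edgeBoundaryCard G S := by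
  have hA1 : G.adjMatrix ℝ *ᵥ 1 = (d : ℝ) • 1 := by
    ext v
    simpa using adjMatrix_mulVec_const_apply_of_regular hreg (a := (1 : ℝ)) (v := v)
  have hray := (G.isHermitian_adjMatrix ℝ).dotProduct_mulVec_le hA1 hμ₂ (sum_cutVector S)
  have hlap := hreg.dotProduct_lapMatrix_mulVec (cutVector S)
  rw [← toLinearMap₂'_apply', lapMatrix_toLinearMap₂', sum_adj_sq_sub_cutVector] at hlap
  rw [cutVector_dotProduct_self] at hray hlap
  have key : (d - μ₂) * (#S * (Fintype.card V - #S)) * Fintype.card V ≤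
      Fintype.card V * edgeBoundaryCard G S * Fintype.card V := by
    linarith
  rcases (Fintype.card V).eq_zero_or_pos with hn | hn
  · simp [hn, card_eq_zero.mp (Nat.le_zero.mp (hn ▸ card_le_univ S))]
  · exact le_of_mul_le_mul_right key (by exact_mod_cast hn)

end SimpleGraph

end Graph

/-- Easy direction of the discrete Cheeger inequality: for a `d`-regular finite simple
graph `G` with second-largest adjacency eigenvalue `μ₂` (characterized as the largest
eigenvalue of the adjacency matrix on the orthogonal complement of the all-ones vector),
one has `(d - μ₂)/2 ≤ h(G)`. -/
theorem cheeger_ineq_lower {V : Type*} [Fintype V] [DecidableEq V] (G : SimpleGraph V)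
    [DecidableRel G.Adj] (d : ℕ) (hreg : G.IsRegularOfDegree d) (μ₂ : ℝ)
    (hμ₂ : IsGreatest {μ : ℝ | ∃ x : V → ℝ, x ≠ 0 ∧ ∑ v, x v = 0 ∧
      (G.adjMatrix ℝ).mulVec x = μ • x} μ₂) :
    ((d : ℝ) - μ₂) / 2 ≤ cheegerConst G := by
  obtain ⟨z, hz0, hz, -⟩ := hμ₂.1
  have := Fintype.nontrivial_of_sum_eq_zero hz0 hz
  obtain ⟨v₀⟩ := ‹Nontrivial V›.to_nonempty
  refine le_csInf ⟨_, {v₀}, Finset.singleton_nonempty v₀, by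
    rw [Finset.card_singleton]; exact Fintype.one_lt_card, rfl⟩ ?_
  rintro _ ⟨S, hS, hSn, rfl⟩
  have hcut := hreg.mul_card_mul_sub_card_le_card_mul_edgeBoundaryCard hμ₂.2 S
  have hs : (0 : ℝ) < S.card := by exact_mod_cast hS.card_pos
  have hSn' : 2 * (S.card : ℝ) ≤ Fintype.card V := by exact_mod_cast hSn
  rw [div_le_div_iff₀ two_pos hs]
  -- `n - #S ≥ n / 2` when `d ≥ μ₂`; otherwise the left side is negative.
  nlinarith
end

section
/- Hard direction of the discrete Cheeger inequality: let G be a connected d-regular simple graph on n vertices with adjacency matrix A, and let μ₂ denote the second-largest eigenvalue of A. Then h(G) ≤ √(2d(d − μ₂)), where h(G) is the Cheeger constant of G. -/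
open Finset Matrix MeasureTheory

theorem Matrix.mul_sum_posPart_sq_le_dotProduct_mulVec {ι : Type*} [Fintype ι]
    {A : Matrix ι ι ℝ} (hA : ∀ i j, 0 ≤ A i j) {μ : ℝ} {g : ι → ℝ} (hg : A *ᵥ g = μ • g) :
    μ * ∑ i, (g i)⁺ ^ 2 ≤ g⁺ ⬝ᵥ A *ᵥ g⁺ := by
  have hpos_mul : ∀ i, (g i)⁺ * g i = (g i)⁺ ^ 2 := fun i => by
    rcases le_total 0 (g i) with h | h
    · rw [posPart_eq_self.2 h]; ring
    · simp [posPart_eq_zero.2 h]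
  calc μ * ∑ i, (g i)⁺ ^ 2 = ∑ i, (g i)⁺ * (A *ᵥ g) i := by
        simp [hg, mul_sum, ← hpos_mul, mul_left_comm]
    _ ≤ g⁺ ⬝ᵥ A *ᵥ g⁺ := by
        refine sum_le_sum fun i _ => mul_le_mul_of_nonneg_left ?_ (posPart_nonneg _)
        exact sum_le_sum fun j _ => mul_le_mul_of_nonneg_left (le_posPart _) (hA i j)

theorem Matrix.exists_eigenvector_two_mul_card_pos_le {ι : Type*} [Fintype ι]
    {A : Matrix ι ι ℝ} {μ : ℝ} {f : ι → ℝ} (hf : f ≠ 0) (hf_sum : ∑ i, f i = 0)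
    (hAf : A *ᵥ f = μ • f) :
    ∃ g : ι → ℝ, A *ᵥ g = μ • g ∧ (∃ i, 0 < g i) ∧ 2 * #{i | 0 < g i} ≤ Fintype.card ι := by
  have hexists_pos : ∀ g : ι → ℝ, g ≠ 0 → ∑ i, g i = 0 → ∃ i, 0 < g i := fun g hg hg_sum => by
    obtain ⟨i, hi⟩ := Function.ne_iff.1 hg
    simpa using exists_pos_of_sum_zero_of_exists_nonzero g hg_sum ⟨i, mem_univ i, hi⟩
  classical
  have hcard : #{i | 0 < f i} + #{i | 0 < (-f) i} ≤ Fintype.card ι := by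
    rw [← card_union_of_disjoint (disjoint_filter.2 fun i _ h h' => by simp at h'; linarith)]
    exact card_le_univ _
  by_cases hsmall : 2 * #{i | 0 < f i} ≤ Fintype.card ι
  · exact ⟨f, hAf, hexists_pos f hf hf_sum, hsmall⟩
  · refine ⟨-f, by rw [mulVec_neg, hAf, smul_neg], hexists_pos _ (neg_ne_zero.2 hf) ?_, by omega⟩
    simp [hf_sum]

theorem integral_indicator_Ico_one (a b : ℝ) :
    ∫ t, (Set.Ico a b).indicator 1 t = max (b - a) 0 := by
  rw [integral_indicator_one measurableSet_Ico, Real.volume_real_Ico]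

theorem integrable_indicator_Ico_one (a b : ℝ) :
    Integrable ((Set.Ico a b).indicator (1 : ℝ → ℝ)) :=
  (integrableOn_const measure_Ico_lt_top.ne).integrable_indicator measurableSet_Ico

theorem card_superlevel_eq_sum_indicator {V : Type*} [Fintype V] (x : V → ℝ) {t : ℝ}
    (ht : 0 ≤ t) :
    (#{v | t < x v} : ℝ) = ∑ v, (Set.Ico 0 (x v)).indicator 1 t := by
  rw [card_filter, Nat.cast_sum]
  refine sum_congr rfl fun v _ => ?_
  by_cases h : t < x v <;> simp [h, ht]

namespace SimpleGraph

variable {V : Type*} [Fintype V] (G : SimpleGraph V) [DecidableRel G.Adj]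

theorem sum_adj_comm (F : V → V → ℝ) :
    ∑ u, ∑ v, (if G.Adj u v then F u v else 0) = ∑ u, ∑ v, (if G.Adj u v then F v u else 0) := by
  rw [sum_comm]
  simp only [adj_comm]

theorem sum_adj_abs_sq_sub_sq_le (y : V → ℝ) :
    ∑ u, ∑ v, (if G.Adj u v then |y u ^ 2 - y v ^ 2| else 0) ≤
      √(∑ u, ∑ v, (if G.Adj u v then (y u - y v) ^ 2 else 0)) *
        √(∑ u, ∑ v, (if G.Adj u v then (y u + y v) ^ 2 else 0)) := by
  simp only [← Fintype.sum_prod_type']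
  convert Real.sum_mul_le_sqrt_mul_sqrt univ
    (fun p : V × V => if G.Adj p.1 p.2 then |y p.1 - y p.2| else 0)
    (fun p => if G.Adj p.1 p.2 then |y p.1 + y p.2| else 0) using 3 with p _ p _ p _
  · split_ifs
    · rw [← abs_mul]; ring_nf
    · simp
  all_goals (refine sum_congr rfl fun p _ => ?_; split_ifs <;> simp)

theorem edgeBoundaryCard_superlevel_eq_sum_indicator (x : V → ℝ) (t : ℝ) :
    (edgeBoundaryCard G {v | t < x v} : ℝ) =
      ∑ u, ∑ v, (if G.Adj u v then (Set.Ico (x v) (x u)).indicator 1 t else 0) := by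
  classical
  rw [edgeBoundaryCard, card_filter, Nat.cast_sum, Fintype.sum_prod_type]
  refine sum_congr rfl fun u _ => sum_congr rfl fun v _ => ?_
  by_cases huv : G.Adj u v <;> simp [Set.indicator_apply, huv, and_comm]

theorem two_mul_sum_adj_max_sub_zero (x : V → ℝ) :
    2 * ∑ u, ∑ v, (if G.Adj u v then max (x u - x v) 0 else 0) =
      ∑ u, ∑ v, (if G.Adj u v then |x u - x v| else 0) := by
  rw [two_mul]
  nth_rw 2 [sum_adj_comm]
  simp only [← sum_add_distrib]
  refine sum_congr rfl fun u _ => sum_congr rfl fun v _ => ?_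
  split_ifs
  · rcases le_total (x v) (x u) with h | h
    · simp [abs_of_nonneg (sub_nonneg.2 h), h]
    · simp [abs_of_nonpos (sub_nonpos.2 h), h]
  · simp

theorem integrable_sum_adj {F : V → V → ℝ → ℝ} (hF : ∀ u v, Integrable (F u v)) :
    Integrable fun t => ∑ u, ∑ v, (if G.Adj u v then F u v t else 0) := by
  refine integrable_finsetSum _ fun u _ => integrable_finsetSum _ fun v _ => ?_
  split_ifs
  exacts [hF u v, integrable_zero _ _ _]

theorem integral_sum_adj {F : V → V → ℝ → ℝ} (hF : ∀ u v, Integrable (F u v)) :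
    ∫ t, ∑ u, ∑ v, (if G.Adj u v then F u v t else 0) =
      ∑ u, ∑ v, (if G.Adj u v then ∫ t, F u v t else 0) := by
  have hF' : ∀ u v, Integrable fun t => if G.Adj u v then F u v t else 0 := fun u v => by
    split_ifs
    exacts [hF u v, integrable_zero _ _ _]
  rw [integral_finsetSum _ fun u _ => integrable_finsetSum _ fun v _ => hF' u v]
  refine sum_congr rfl fun u _ => ?_
  rw [integral_finsetSum _ fun v _ => hF' u v]
  refine sum_congr rfl fun v _ => ?_
  split_ifs <;> simp

variable {G}

theorem exists_superlevel_edgeBoundaryCard_le {x : V → ℝ} (hx : ∀ v, 0 ≤ x v)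
    (hx_pos : ∃ v, 0 < x v) {c : ℝ}
    (h : ∑ u, ∑ v, (if G.Adj u v then |x u - x v| else 0) ≤ 2 * c * ∑ v, x v) :
    ∃ t, 0 ≤ t ∧ ({v | t < x v} : Finset V).Nonempty ∧
      (edgeBoundaryCard G {v | t < x v} : ℝ) ≤ c * #{v | t < x v} := by
  by_contra! hlarge
  obtain ⟨w, hw⟩ := hx_pos
  have : Nonempty V := ⟨w⟩
  obtain ⟨v₀, hv₀⟩ := Finite.exists_max x
  -- For `t ≥ 0`, `φ t = |∂{x > t}| - c |{x > t}|`, written so that its integral is computable.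
  set φ : ℝ → ℝ := fun t =>
    ∑ u, ∑ v, (if G.Adj u v then (Set.Ico (x v) (x u)).indicator 1 t else 0)
      - c * ∑ v, (Set.Ico 0 (x v)).indicator 1 t
  have hvol_int : Integrable fun t => ∑ v, (Set.Ico 0 (x v)).indicator (1 : ℝ → ℝ) t :=
    integrable_finsetSum _ fun v _ => integrable_indicator_Ico_one _ _
  have hφ_int : Integrable φ :=
    (integrable_sum_adj G fun u v => integrable_indicator_Ico_one _ _).sub (hvol_int.const_mul c)
  have hφ_integral : ∫ t, φ t ≤ 0 := by
    rw [integral_sub (integrable_sum_adj G fun u v => integrable_indicator_Ico_one _ _)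
      (hvol_int.const_mul c), integral_const_mul,
      integral_finsetSum _ fun v _ => integrable_indicator_Ico_one _ _,
      integral_sum_adj G fun u v => integrable_indicator_Ico_one _ _]
    simp only [integral_indicator_Ico_one, sub_zero, fun v => max_eq_left (hx v)]
    linarith [two_mul_sum_adj_max_sub_zero G x]
  have hφ_pos : ∀ t ∈ Set.Ico 0 (x v₀), 0 < φ t := by
    rintro t ⟨ht, htv₀⟩
    have hcut := hlarge t ht ⟨v₀, by simpa using htv₀⟩
    rw [card_superlevel_eq_sum_indicator x ht,
      edgeBoundaryCard_superlevel_eq_sum_indicator] at hcut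
    exact sub_pos.2 hcut
  have hφ_nonneg : 0 ≤ φ := by
    intro t
    by_cases ht : t ∈ Set.Ico 0 (x v₀)
    · exact (hφ_pos t ht).le
    · have hvol : ∑ v, (Set.Ico 0 (x v)).indicator (1 : ℝ → ℝ) t = 0 :=
        sum_eq_zero fun v _ =>
          Set.indicator_of_notMem (fun hv => ht ⟨hv.1, hv.2.trans_le (hv₀ v)⟩) _
      simp only [φ, hvol, mul_zero, sub_zero, Pi.zero_apply]
      refine sum_nonneg fun u _ => sum_nonneg fun v _ => ?_
      split_ifs
      exacts [Set.indicator_nonneg (fun _ _ => zero_le_one) _, le_rfl]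
  have hφ_integral_pos : 0 < ∫ t, φ t := by
    refine (integral_pos_iff_support_of_nonneg hφ_nonneg hφ_int).2 <|
      lt_of_lt_of_le ?_ (measure_mono fun t ht => (hφ_pos t ht).ne')
    rw [Real.volume_Ico, sub_zero]
    exact ENNReal.ofReal_pos.2 (hw.trans_le (hv₀ w))
  linarith

theorem IsRegularOfDegree.sum_adj_left {d : ℕ} (hreg : G.IsRegularOfDegree d) (f : V → ℝ) :
    ∑ u, ∑ v, (if G.Adj u v then f u else 0) = d * ∑ u, f u := by
  rw [mul_sum]
  refine sum_congr rfl fun u _ => ?_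
  rw [← hreg.degree_eq u, degree_eq_sum_if_adj, sum_mul]
  simp only [ite_mul, one_mul, zero_mul]

theorem IsRegularOfDegree.sum_adj_right {d : ℕ} (hreg : G.IsRegularOfDegree d) (f : V → ℝ) :
    ∑ u, ∑ v, (if G.Adj u v then f v else 0) = d * ∑ u, f u := by
  rw [← sum_adj_comm, hreg.sum_adj_left]

theorem IsRegularOfDegree.sum_adj_sub_sq {d : ℕ} (hreg : G.IsRegularOfDegree d) (y : V → ℝ) :
    ∑ u, ∑ v, (if G.Adj u v then (y u - y v) ^ 2 else 0) =
      2 * (d * ∑ v, y v ^ 2 - y ⬝ᵥ G.adjMatrix ℝ *ᵥ y) := by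
  have hexpand : ∑ u, ∑ v, (if G.Adj u v then (y u - y v) ^ 2 else 0) =
      ∑ u, ∑ v, (if G.Adj u v then y u ^ 2 else 0) + ∑ u, ∑ v, (if G.Adj u v then y v ^ 2 else 0)
        - 2 * ∑ u, ∑ v, (if G.Adj u v then y u * y v else 0) := by
    simp only [mul_sum, ← sum_add_distrib, ← sum_sub_distrib]
    refine sum_congr rfl fun u _ => sum_congr rfl fun v _ => ?_
    split_ifs <;> ring
  rw [hexpand, hreg.sum_adj_left, hreg.sum_adj_right, dotProduct_mulVec_adjMatrix]
  ring

theorem IsRegularOfDegree.sum_adj_add_sq_le {d : ℕ} (hreg : G.IsRegularOfDegree d) (y : V → ℝ) :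
    ∑ u, ∑ v, (if G.Adj u v then (y u + y v) ^ 2 else 0) ≤ 4 * d * ∑ v, y v ^ 2 := by
  calc ∑ u, ∑ v, (if G.Adj u v then (y u + y v) ^ 2 else 0)
      ≤ ∑ u, ∑ v, (2 * (if G.Adj u v then y u ^ 2 else 0) +
          2 * (if G.Adj u v then y v ^ 2 else 0)) := by
        gcongr with u _ v _
        split_ifs
        · nlinarith [sq_nonneg (y u - y v)]
        · simp
    _ = 4 * d * ∑ v, y v ^ 2 := by
        simp only [sum_add_distrib, ← mul_sum, hreg.sum_adj_left, hreg.sum_adj_right]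
        ring

theorem IsRegularOfDegree.sum_adj_posPart_sub_sq_le {d : ℕ} (hreg : G.IsRegularOfDegree d)
    {μ : ℝ} {g : V → ℝ} (hg : G.adjMatrix ℝ *ᵥ g = μ • g) :
    ∑ u, ∑ v, (if G.Adj u v then ((g u)⁺ - (g v)⁺) ^ 2 else 0) ≤
      2 * (d - μ) * ∑ v, (g v)⁺ ^ 2 := by
  have hrayleigh := Matrix.mul_sum_posPart_sq_le_dotProduct_mulVec
    (fun u v => by by_cases h : G.Adj u v <;> simp [h]) hg
  have hdirichlet := hreg.sum_adj_sub_sq g⁺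
  simp only [Pi.posPart_apply] at hdirichlet hrayleigh
  rw [hdirichlet]
  linarith

theorem IsRegularOfDegree.sum_adj_abs_posPart_sq_sub_le {d : ℕ} (hreg : G.IsRegularOfDegree d)
    {μ : ℝ} {g : V → ℝ} (hg : G.adjMatrix ℝ *ᵥ g = μ • g) :
    ∑ u, ∑ v, (if G.Adj u v then |(g u)⁺ ^ 2 - (g v)⁺ ^ 2| else 0) ≤
      2 * √(2 * d * (d - μ)) * ∑ v, (g v)⁺ ^ 2 := by
  have hdirichlet := hreg.sum_adj_posPart_sub_sq_le hg
  have hdirichlet_nonneg : 0 ≤ ∑ u, ∑ v, (if G.Adj u v then ((g u)⁺ - (g v)⁺) ^ 2 else 0) :=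
    sum_nonneg fun u _ => sum_nonneg fun v _ => by split_ifs <;> positivity
  set S := ∑ v, (g v)⁺ ^ 2
  calc _ ≤ _ := sum_adj_abs_sq_sub_sq_le G _
    _ ≤ √(2 * (d - μ) * S) * √(4 * d * S) := by
        gcongr
        exact hreg.sum_adj_add_sq_le _
    _ = √((2 * S) ^ 2 * (2 * d * (d - μ))) := by
        rw [← Real.sqrt_mul (hdirichlet_nonneg.trans hdirichlet)]
        ring_nf
    _ = 2 * √(2 * d * (d - μ)) * S := by
        rw [Real.sqrt_mul (sq_nonneg _), Real.sqrt_sq (by positivity)]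
        ring

end SimpleGraph

theorem cheegerConst_le {V : Type*} [Fintype V] (G : SimpleGraph V) {S : Finset V}
    (hS : S.Nonempty) (hS_card : 2 * #S ≤ Fintype.card V) :
    cheegerConst G ≤ edgeBoundaryCard G S / #S :=
  csInf_le ⟨0, fun _ ⟨_, _, _, hr⟩ => hr ▸ by positivity⟩ ⟨S, hS, hS_card, rfl⟩

theorem cheeger_ineq_upper_general {V : Type*} [Fintype V] (G : SimpleGraph V)
    [DecidableRel G.Adj] (d : ℕ) (hreg : G.IsRegularOfDegree d) (μ₂ : ℝ)
    (hμ₂ : IsGreatest {μ : ℝ | ∃ x : V → ℝ, x ≠ 0 ∧ ∑ v, x v = 0 ∧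
      (G.adjMatrix ℝ).mulVec x = μ • x} μ₂) :
    cheegerConst G ≤ Real.sqrt (2 * d * ((d : ℝ) - μ₂)) := by
  obtain ⟨f, hf, hf_sum, hf_eigen⟩ := hμ₂.1
  obtain ⟨g, hg_eigen, ⟨v, hv⟩, hg_card⟩ :=
    exists_eigenvector_two_mul_card_pos_le hf hf_sum hf_eigen
  obtain ⟨t, ht, hne, hcut⟩ := SimpleGraph.exists_superlevel_edgeBoundaryCard_le
    (x := fun v => (g v)⁺ ^ 2) (fun v => sq_nonneg _) ⟨v, pow_pos (posPart_pos hv) 2⟩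
    (hreg.sum_adj_abs_posPart_sq_sub_le hg_eigen)
  have hsub : ({w | t < (g w)⁺ ^ 2} : Finset V) ⊆ ({w | 0 < g w} : Finset V) := by
    intro w hw
    simp only [mem_filter, mem_univ, true_and] at hw ⊢
    by_contra! hw'
    rw [posPart_eq_zero.2 hw'] at hw
    linarith
  have hS_card : 2 * #{w | t < (g w)⁺ ^ 2} ≤ Fintype.card V :=
    (Nat.mul_le_mul_left 2 (card_le_card hsub)).trans hg_card
  calc cheegerConst G ≤ edgeBoundaryCard G _ / #_ := cheegerConst_le G hne hS_card
    _ ≤ _ := (div_le_iff₀ (mod_cast hne.card_pos)).2 hcut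

/-- Hard direction of the discrete Cheeger inequality: for a connected `d`-regular
finite simple graph `G` with second-largest adjacency eigenvalue `μ₂` (characterized as
the largest eigenvalue of the adjacency matrix on the orthogonal complement of the
all-ones vector), one has `h(G) ≤ √(2d(d - μ₂))`. -/
theorem cheeger_ineq_upper {V : Type*} [Fintype V] [DecidableEq V] (G : SimpleGraph V)
    [DecidableRel G.Adj] (hconn : G.Connected)
    (d : ℕ) (hreg : G.IsRegularOfDegree d) (μ₂ : ℝ)
    (hμ₂ : IsGreatest {μ : ℝ | ∃ x : V → ℝ, x ≠ 0 ∧ ∑ v, x v = 0 ∧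
      (G.adjMatrix ℝ).mulVec x = μ • x} μ₂) :
    cheegerConst G ≤ Real.sqrt (2 * d * ((d : ℝ) - μ₂)) :=
  cheeger_ineq_upper_general G d hreg μ₂ hμ₂
end

section
/- The local edge flip preserves connectivity: let G = (𝒱, ℰ) be a connected simple graph, and let i, u, v, j be four distinct vertices with (i,u) ∈ ℰ, (u,v) ∈ ℰ, (v,j) ∈ ℰ, (i,v) ∉ ℰ, and (j,u) ∉ ℰ. Let G' be the graph with edge set ℰ' = (ℰ \ {(i,u), (j,v)}) ∪ {(i,v), (j,u)}. Then G' is connected. -/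
/-- The local edge flip preserves connectivity: if `G` is a connected simple graph and
`i, u, v, j` are four distinct vertices with `(i,u), (u,v), (v,j)` edges and
`(i,v), (j,u)` non-edges, then the graph `G'` with edge set
`(ℰ \ {(i,u), (j,v)}) ∪ {(i,v), (j,u)}` is connected. -/
theorem edgeFlip_preserves_connected {V : Type*} (G : SimpleGraph V)
    (hconn : G.Connected) (i u v j : V)
    (hiu : i ≠ u) (hiv : i ≠ v) (hij : i ≠ j) (huv : u ≠ v) (huj : u ≠ j) (hvj : v ≠ j)
    (aiu : G.Adj i u) (auv : G.Adj u v) (avj : G.Adj v j)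
    (niv : ¬ G.Adj i v) (nju : ¬ G.Adj j u) :
    (SimpleGraph.fromEdgeSet
      ((G.edgeSet \ {s(i, u), s(j, v)}) ∪ {s(i, v), s(j, u)})).Connected := by
  set S : Set (Sym2 V) := (G.edgeSet \ {s(i, u), s(j, v)}) ∪ {s(i, v), s(j, u)} with hS
  set G' : SimpleGraph V := SimpleGraph.fromEdgeSet S with hG'
  have hadj : ∀ a b : V, G'.Adj a b ↔ s(a, b) ∈ S ∧ a ≠ b := by
    intro a b; rw [hG', SimpleGraph.fromEdgeSet_adj]
  have aiv' : G'.Adj i v := by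
    rw [hadj]
    exact ⟨Or.inr (Or.inl rfl), hiv⟩
  have aju' : G'.Adj j u := by
    rw [hadj]
    exact ⟨Or.inr (Or.inr rfl), fun h => huj h.symm⟩
  have auv' : G'.Adj u v := by
    rw [hadj]
    refine ⟨Or.inl ⟨G.mem_edgeSet.mpr auv, ?_⟩, huv⟩
    intro h
    rcases h with h | h
    · rw [Sym2.eq_iff] at h
      rcases h with ⟨h1, h2⟩ | ⟨h1, h2⟩
      · exact huv h2.symm
      · exact hiv h2.symm
    · simp only [Set.mem_singleton_iff, Sym2.eq_iff] at h
      rcases h with ⟨h1, h2⟩ | ⟨h1, h2⟩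
      · exact huj h1
      · exact huv h1
  -- reachability transfer for each edge of G
  have step : ∀ a b : V, G.Adj a b → G'.Reachable a b := by
    intro a b hab
    by_cases h1 : s(a, b) = s(i, u)
    · rw [Sym2.eq_iff] at h1
      rcases h1 with ⟨rfl, rfl⟩ | ⟨rfl, rfl⟩
      · exact (aiv'.reachable).trans (auv'.symm.reachable)
      · exact (auv'.reachable).trans (aiv'.symm.reachable)
    by_cases h2 : s(a, b) = s(j, v)
    · rw [Sym2.eq_iff] at h2
      rcases h2 with ⟨rfl, rfl⟩ | ⟨rfl, rfl⟩
      · exact (aju'.reachable).trans (auv'.reachable)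
      · exact (auv'.symm.reachable).trans (aju'.symm.reachable)
    · have : G'.Adj a b := by
        rw [hadj]
        refine ⟨Or.inl ⟨G.mem_edgeSet.mpr hab, ?_⟩, hab.ne⟩
        intro h
        rcases h with h | h
        · exact h1 h
        · exact h2 h
      exact this.reachable
  rw [SimpleGraph.connected_iff]
  refine ⟨fun a b => ?_, hconn.nonempty⟩
  have h := hconn.preconnected a b
  rw [SimpleGraph.reachable_iff_reflTransGen] at h
  induction h with
  | refl => rfl
  | tail _ hadj ih => exact ih.trans (step _ _ hadj)
end
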